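/- arXiv:0807.2108 — 10 statements merged into one kernel-verified Lean document; each statement's English description precedes it below -/
import Mathlib

section
/- Let (s_n)_{n∈ℕ} be a sequence of real numbers and let 1/2 < γ ≤ 1. Define the weighted sequence s_{n+γ} := (1−γ)·s_n + γ·s_{n+1} for n ∈ ℕ. If the sequence (s_{n+γ})_{n∈ℕ} is bounded, then the original sequence (s_n)_{n∈ℕ} is bounded. -/
/-!
Solving `(1-γ) s_n + γ s_{n+1}` for `s_{n+1}` gives `γ |s_{n+1}| ≤ |1-γ| |s_n| + C`, and
`γ > 1/2` is exactly `|1-γ| < γ`: the map `x ↦ (|1-γ| x + C) / γ` is a contraction, so `|s_n|`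
never exceeds the larger of `|s_0|` and its fixed point `C / (γ - |1-γ|)`.
-/

theorem le_max_of_mul_succ_le_mul_add {a : ℕ → ℝ} {p q c : ℝ} (hq : 0 ≤ q) (hqp : q < p)
    (h : ∀ n, p * a (n + 1) ≤ q * a n + c) (n : ℕ) : a n ≤ max (a 0) (c / (p - q)) := by
  induction n with
  | zero => exact le_max_left _ _
  | succ n ih =>
    set M := max (a 0) (c / (p - q))
    have hc : c ≤ (p - q) * M :=
      (div_le_iff₀' (sub_pos.2 hqp)).1 (le_max_right _ _)
    have : p * a (n + 1) ≤ p * M := by nlinarith [h n]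
    exact le_of_mul_le_mul_left this (hq.trans_lt hqp)

theorem mul_abs_le_abs_mul_add_abs_add (a b x y : ℝ) (hb : 0 ≤ b) :
    b * |y| ≤ |a| * |x| + |a * x + b * y| := by
  calc b * |y| = |(a * x + b * y) - a * x| := by rw [add_sub_cancel_left, abs_mul, abs_of_nonneg hb]
    _ ≤ |a * x + b * y| + |a * x| := abs_sub _ _
    _ = |a| * |x| + |a * x + b * y| := by rw [abs_mul, add_comm]

theorem weighted_bounded_implies_bounded_general
    (s : ℕ → ℝ) (γ : ℝ) (hγ₁ : 1/2 < γ)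
    (hbdd : ∃ C > 0, ∀ n : ℕ, |(1 - γ) * s n + γ * s (n + 1)| ≤ C) :
    ∃ C > 0, ∀ n : ℕ, |s n| ≤ C := by
  obtain ⟨C, hC, h⟩ := hbdd
  have hcontr : |1 - γ| < γ := abs_sub_lt_iff.2 ⟨by linarith, by linarith⟩
  have hstep : ∀ n, γ * |s (n + 1)| ≤ |1 - γ| * |s n| + C := fun n =>
    (mul_abs_le_abs_mul_add_abs_add (1 - γ) γ (s n) _ (by linarith)).trans (by linarith [h n])
  refine ⟨max |s 0| (C / (γ - |1 - γ|)), ?_, ?_⟩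
  · exact lt_max_of_lt_right (div_pos hC (sub_pos.2 hcontr))
  · exact le_max_of_mul_succ_le_mul_add (abs_nonneg _) hcontr hstep

/-- If `1/2 < γ ≤ 1` and the weighted sequence `n ↦ (1-γ)·s n + γ·s (n+1)` is bounded,
then the original sequence `s` is bounded. -/
theorem weighted_bounded_implies_bounded
    (s : ℕ → ℝ) (γ : ℝ) (hγ₁ : 1/2 < γ) (hγ₂ : γ ≤ 1)
    (hbdd : ∃ C > 0, ∀ n : ℕ, |(1 - γ) * s n + γ * s (n + 1)| ≤ C) :
    ∃ C > 0, ∀ n : ℕ, |s n| ≤ C :=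
  weighted_bounded_implies_bounded_general s γ hγ₁ hbdd
end

section
/- Let M be a real symmetric positive definite n × n matrix, K a real symmetric positive semidefinite n × n matrix, and ω ≥ 0 a real number such that xᵀ·K·x ≤ ω·xᵀ·M·x for all x ∈ ℝⁿ. Let Δt > 0 and γ ∈ [0,1] satisfy Δt·(1 − 2γ)·ω < 2. Then the matrix A := M + (γ − 1/2)·Δt·K is symmetric positive definite. In particular, for 1/2 ≤ γ ≤ 1 the matrix A is positive definite for every Δt > 0. -/
/-!
Write `A = M + cK` with `c = (γ - 1/2)Δt`. For `c ≥ 0` it is a positive definite plus a positive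
semidefinite matrix. For `c < 0` the bound `xᵀKx ≤ ω·xᵀMx` gives `xᵀAx ≥ (1 + cω)·xᵀMx`, and the
step-size condition `Δt(1 - 2γ)ω < 2` says exactly that `1 + cω > 0`.
-/

open Matrix

namespace Matrix.PosDef

variable {ι : Type*} {M K : Matrix ι ι ℝ} {c ω : ℝ}

lemma add_smul_of_nonneg (hM : M.PosDef) (hK : K.PosSemidef) (hc : 0 ≤ c) :
    (M + c • K).PosDef :=
  hM.add_posSemidef (hK.smul hc)

lemma add_smul_of_neg [Fintype ι] (hM : M.PosDef) (hK : K.IsHermitian)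
    (hKM : ∀ x, x ⬝ᵥ K *ᵥ x ≤ ω * (x ⬝ᵥ M *ᵥ x)) (hc : c < 0) (hcω : 0 < 1 + c * ω) :
    (M + c • K).PosDef := by
  refine .of_dotProduct_mulVec_pos (hM.isHermitian.add (hK.smul (.all c))) fun x hx => ?_
  have hMx : 0 < x ⬝ᵥ M *ᵥ x := by simpa using hM.dotProduct_mulVec_pos hx
  calc 0 < (1 + c * ω) * (x ⬝ᵥ M *ᵥ x) := mul_pos hcω hMx
    _ = x ⬝ᵥ M *ᵥ x + c * (ω * (x ⬝ᵥ M *ᵥ x)) := by ring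
    _ ≤ x ⬝ᵥ M *ᵥ x + c * (x ⬝ᵥ K *ᵥ x) := by
      gcongr x ⬝ᵥ M *ᵥ x + ?_
      exact mul_le_mul_of_nonpos_left (hKM x) hc.le
    _ = star x ⬝ᵥ (M + c • K) *ᵥ x := by
      simp [add_mulVec, smul_mulVec, dotProduct_add, dotProduct_smul]

lemma add_smul [Fintype ι] (hM : M.PosDef) (hK : K.PosSemidef)
    (hKM : ∀ x, x ⬝ᵥ K *ᵥ x ≤ ω * (x ⬝ᵥ M *ᵥ x)) (hcω : 0 < 1 + c * ω) :
    (M + c • K).PosDef := by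
  rcases le_or_gt 0 c with hc | hc
  · exact hM.add_smul_of_nonneg hK hc
  · exact hM.add_smul_of_neg hK.isHermitian hKM hc hcω

end Matrix.PosDef

theorem A_matrix_posDef_general {n : ℕ} (M K : Matrix (Fin n) (Fin n) ℝ)
    (hM : M.PosDef) (hK : K.PosSemidef)
    (ω : ℝ)
    (hgen : ∀ x : Fin n → ℝ, x ⬝ᵥ K.mulVec x ≤ ω * (x ⬝ᵥ M.mulVec x))
    (Δt γ : ℝ)
    (hcond : Δt * (1 - 2 * γ) * ω < 2) :
    (M + ((γ - 1/2) * Δt) • K).PosDef ∧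
      (1/2 ≤ γ → ∀ Δt' : ℝ, 0 < Δt' → (M + ((γ - 1/2) * Δt') • K).PosDef) :=
  ⟨hM.add_smul hK hgen (by linarith),
    fun hγ _ hΔt' => hM.add_smul_of_nonneg hK (mul_nonneg (by linarith) hΔt'.le)⟩

/-- If `M` is symmetric positive definite, `K` symmetric positive semidefinite,
`ω ≥ 0` bounds the generalized eigenvalues (`xᵀKx ≤ ω·xᵀMx` for all `x`), `Δt > 0`,
`γ ∈ [0,1]` and `Δt·(1-2γ)·ω < 2`, then `A = M + (γ - 1/2)·Δt·K` is symmetric positive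
definite.  In particular, for `1/2 ≤ γ ≤ 1` it is positive definite for every `Δt > 0`. -/
theorem A_matrix_posDef {n : ℕ} (M K : Matrix (Fin n) (Fin n) ℝ)
    (hM : M.PosDef) (hK : K.PosSemidef)
    (ω : ℝ) (hω : 0 ≤ ω)
    (hgen : ∀ x : Fin n → ℝ, x ⬝ᵥ K.mulVec x ≤ ω * (x ⬝ᵥ M.mulVec x))
    (Δt γ : ℝ) (hΔt : 0 < Δt) (hγ₀ : 0 ≤ γ) (hγ₁ : γ ≤ 1)
    (hcond : Δt * (1 - 2 * γ) * ω < 2) :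
    (M + ((γ - 1/2) * Δt) • K).PosDef ∧
      (1/2 ≤ γ → ∀ Δt' : ℝ, 0 < Δt' → (M + ((γ - 1/2) * Δt') • K).PosDef) :=
  A_matrix_posDef_general M K hM hK ω hgen Δt γ hcond
end

section
/- Under the d-continuity domain decomposition method, the energy ∑_{i=1}^S d_i(n)ᵀ·A_i·d_i(n) is non-increasing in n: for all n ∈ ℕ, ∑_{i=1}^S d_i(n+1)ᵀ·A_i·d_i(n+1) ≤ ∑_{i=1}^S d_i(n)ᵀ·A_i·d_i(n). -/
/-!
Each subdomain energy `dᵀ A d`, with `A = M + (γ - 1/2) Δt K` symmetric, changes over one step by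
`(d₁ - d₀)ᵀ A (d₁ + d₀) = Δt uᵀ A (d₁ + d₀)`, where `u` is the trapezoidal average velocity.
Averaging the subdomain equations at the two time levels with weights `1 - γ`, `γ` expresses `M u`
through the averaged multiplier `μ`, and the `γ - 1/2` part of `A` is exactly what cancels the
non-symmetric remainder. The increment becomes `Δt μᵀ C (d₁ + d₀) - (Δt/2) (d₁ + d₀)ᵀ K (d₁ + d₀)`.
Summed over subdomains, the first term vanishes by the d-continuity constraint at both time levels
and the second is nonpositive because each `K` is positive semidefinite.
-/

open Matrix Finset

namespace Matrix

variable {R ι : Type*} [Fintype ι]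

theorem IsSymm.dotProduct_mulVec_comm [CommSemiring R] {A : Matrix ι ι R} (hA : A.IsSymm)
    (x y : ι → R) : x ⬝ᵥ A *ᵥ y = y ⬝ᵥ A *ᵥ x := by
  rw [dotProduct_mulVec, ← mulVec_transpose, hA.eq, dotProduct_comm]

theorem IsSymm.dotProduct_mulVec_sub_dotProduct_mulVec [CommRing R] {A : Matrix ι ι R}
    (hA : A.IsSymm) (x y : ι → R) :
    x ⬝ᵥ A *ᵥ x - y ⬝ᵥ A *ᵥ y = (x - y) ⬝ᵥ A *ᵥ (x + y) := by
  rw [mulVec_add, sub_dotProduct, dotProduct_add, dotProduct_add, hA.dotProduct_mulVec_comm y x]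
  ring

end Matrix

section EnergyIncrement

variable {𝕜 ι κ : Type*} [Field 𝕜] [CharZero 𝕜] [Fintype ι] [Fintype κ]

theorem trapezoidal_energy_increment {M K : Matrix ι ι 𝕜} (hM : M.IsSymm) (hK : K.IsSymm)
    (C : Matrix κ ι 𝕜) (Δt γ : 𝕜) {d₀ d₁ v₀ v₁ : ι → 𝕜} {l₀ l₁ : κ → 𝕜}
    (h₀ : M *ᵥ v₀ + K *ᵥ d₀ = Cᵀ *ᵥ l₀) (h₁ : M *ᵥ v₁ + K *ᵥ d₁ = Cᵀ *ᵥ l₁)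
    (hupd : d₁ = d₀ + Δt • ((1 - γ) • v₀ + γ • v₁)) :
    d₁ ⬝ᵥ (M + ((γ - 1/2) * Δt) • K) *ᵥ d₁ - d₀ ⬝ᵥ (M + ((γ - 1/2) * Δt) • K) *ᵥ d₀ =
      Δt * (((1 - γ) • l₀ + γ • l₁) ⬝ᵥ C *ᵥ (d₁ + d₀)) -
        Δt / 2 * ((d₁ + d₀) ⬝ᵥ K *ᵥ (d₁ + d₀)) := by
  set u := (1 - γ) • v₀ + γ • v₁
  set s := d₁ + d₀
  set μ := (1 - γ) • l₀ + γ • l₁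
  have hstep : d₁ - d₀ = Δt • u := by rw [hupd]; abel
  have hMu : M *ᵥ u = Cᵀ *ᵥ μ - K *ᵥ ((1 - γ) • d₀ + γ • d₁) := by
    simp only [u, μ, mulVec_add, mulVec_smul, ← h₀, ← h₁]
    module
  have hmid : (1 - γ) • d₀ + γ • d₁ = (1 / 2 : 𝕜) • s + ((γ - 1/2) * Δt) • u := by
    rw [mul_smul, ← hstep]
    module
  calc _ = (Δt • u) ⬝ᵥ (M + ((γ - 1/2) * Δt) • K) *ᵥ s := by
        rw [(hM.add (hK.smul _)).dotProduct_mulVec_sub_dotProduct_mulVec, hstep]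
    _ = Δt * (s ⬝ᵥ M *ᵥ u) + (γ - 1/2) * Δt * Δt * (s ⬝ᵥ K *ᵥ u) := by
        rw [hM.dotProduct_mulVec_comm s, hK.dotProduct_mulVec_comm s]
        simp only [add_mulVec, smul_mulVec, smul_dotProduct, dotProduct_add, dotProduct_smul,
          smul_eq_mul]
        ring
    _ = Δt * (μ ⬝ᵥ C *ᵥ s) - Δt / 2 * (s ⬝ᵥ K *ᵥ s) := by
        rw [hMu, hmid, mulVec_transpose, dotProduct_sub, dotProduct_comm s (μ ᵥ* C),
          ← dotProduct_mulVec]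
        simp only [mulVec_add, mulVec_smul, dotProduct_add, dotProduct_smul, smul_eq_mul]
        ring

end EnergyIncrement

theorem dContinuity_energy_nonincreasing_general
    (S m : ℕ) (nn : Fin S → ℕ)
    (M K : ∀ i : Fin S, Matrix (Fin (nn i)) (Fin (nn i)) ℝ)
    (hM : ∀ i, (M i).PosDef) (hK : ∀ i, (K i).PosSemidef)
    (C : ∀ i : Fin S, Matrix (Fin m) (Fin (nn i)) ℝ)
    (Δt γ : ℝ) (hΔt : 0 < Δt)
    (d v : ∀ i : Fin S, ℕ → (Fin (nn i) → ℝ)) (lam : ℕ → (Fin m → ℝ))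
    (heq : ∀ i n, (M i).mulVec (v i n) + (K i).mulVec (d i n) = (C i)ᵀ.mulVec (lam n))
    (hupd : ∀ i n, d i (n + 1) = d i n + Δt • ((1 - γ) • v i n + γ • v i (n + 1)))
    (hcont : ∀ n, ∑ i : Fin S, (C i).mulVec (d i n) = 0) :
    ∀ n : ℕ,
      ∑ i : Fin S, d i (n + 1) ⬝ᵥ (M i + ((γ - 1/2) * Δt) • K i).mulVec (d i (n + 1)) ≤
        ∑ i : Fin S, d i n ⬝ᵥ (M i + ((γ - 1/2) * Δt) • K i).mulVec (d i n) := by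
  intro n
  set μ := (1 - γ) • lam n + γ • lam (n + 1)
  set s := fun i ↦ d i (n + 1) + d i n
  have hcoupling : ∑ i, μ ⬝ᵥ C i *ᵥ s i = 0 := by
    simp only [s, ← dotProduct_sum, mulVec_add, sum_add_distrib, hcont, add_zero, dotProduct_zero]
  have hdissipation : 0 ≤ ∑ i, s i ⬝ᵥ K i *ᵥ s i :=
    sum_nonneg fun i _ ↦ by simpa using (hK i).dotProduct_mulVec_nonneg (s i)
  rw [← sub_nonpos, ← sum_sub_distrib]
  rw [sum_congr rfl fun i _ ↦ trapezoidal_energy_increment (isHermitian_iff_isSymm.mp (hM i).1)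
    (isHermitian_iff_isSymm.mp (hK i).1) (C i) Δt γ (heq i n) (heq i (n + 1)) (hupd i n)]
  rw [sum_sub_distrib, ← mul_sum, ← mul_sum, hcoupling]
  linarith [mul_nonneg hΔt.le hdissipation]

/-- Under the d-continuity domain decomposition method (subdomain equation, trapezoidal
update, and d-continuity constraint, with zero external forcing), the energy
`∑ᵢ dᵢ(n)ᵀ·Aᵢ·dᵢ(n)` with `Aᵢ = Mᵢ + (γ - 1/2)·Δt·Kᵢ` is non-increasing in `n`. -/
theorem dContinuity_energy_nonincreasing
    (S m : ℕ) (hS : 1 ≤ S) (nn : Fin S → ℕ)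
    (M K : ∀ i : Fin S, Matrix (Fin (nn i)) (Fin (nn i)) ℝ)
    (hM : ∀ i, (M i).PosDef) (hK : ∀ i, (K i).PosSemidef)
    (C : ∀ i : Fin S, Matrix (Fin m) (Fin (nn i)) ℝ)
    (Δt γ : ℝ) (hΔt : 0 < Δt) (hγ₀ : 0 ≤ γ) (hγ₁ : γ ≤ 1)
    (d v : ∀ i : Fin S, ℕ → (Fin (nn i) → ℝ)) (lam : ℕ → (Fin m → ℝ))
    (heq : ∀ i n, (M i).mulVec (v i n) + (K i).mulVec (d i n) = (C i)ᵀ.mulVec (lam n))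
    (hupd : ∀ i n, d i (n + 1) = d i n + Δt • ((1 - γ) • v i n + γ • v i (n + 1)))
    (hcont : ∀ n, ∑ i : Fin S, (C i).mulVec (d i n) = 0) :
    ∀ n : ℕ,
      ∑ i : Fin S, d i (n + 1) ⬝ᵥ (M i + ((γ - 1/2) * Δt) • K i).mulVec (d i (n + 1)) ≤
        ∑ i : Fin S, d i n ⬝ᵥ (M i + ((γ - 1/2) * Δt) • K i).mulVec (d i n) :=
  dContinuity_energy_nonincreasing_general S m nn M K hM hK C Δt γ hΔt d v lam heq hupd hcont
end

section
/- Under the d-continuity domain decomposition method, if in addition each matrix A_i = M_i + (γ − 1/2)·Δt·K_i is positive definite, then the temperatures and the weighted rates are bounded: there exists a constant C > 0 such that for all i ∈ {1,…,S} and all n ∈ ℕ, ‖d_i(n)‖ ≤ C and ‖(1−γ)·v_i(n) + γ·v_i(n+1)‖ ≤ C. -/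
/-!
Testing the subdomain equations against vectors `z` of the constraint space
`N = {z | ∑ᵢ Cᵢ zᵢ = 0}` eliminates the multiplier `λ`. The weighted rates `w n` lie in `N`
because the `d n` do, and testing with `w n` gives the energy identity
`Δt · (w n)ᵀ A (w n) = (E n - E (n + 1)) / 2` for `E n = ∑ᵢ dᵢ(n)ᵀ Kᵢ dᵢ(n)`. So `E` decreases,
and positive definiteness of `A` bounds `w`. The energy controls `d` only away from `ker K`; along
`z ∈ N ∩ ker K` the pairing `zᵀ M d n` is conserved instead. On the `M`-orthogonal complement of
`N ∩ ker K` in `N` the form `K` is positive definite, so `d n - d 0`, which lies there and has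
`K`-energy at most `4 E 0`, is bounded.
-/

open Matrix

/-- The Euclidean norm of a vector indexed by `Fin k`. -/
noncomputable def enorm {k : ℕ} (x : Fin k → ℝ) : ℝ := Real.sqrt (x ⬝ᵥ x)

namespace LinearMap.BilinForm

variable {V : Type*} [NormedAddCommGroup V] [NormedSpace ℝ V] [FiniteDimensional ℝ V]

theorem exists_pos_mul_norm_sq_le (B : LinearMap.BilinForm ℝ V) (hB : ∀ x, x ≠ 0 → 0 < B x x) :
    ∃ c > 0, ∀ x, c * ‖x‖ ^ 2 ≤ B x x := by
  rcases subsingleton_or_nontrivial V with _ | _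
  · exact ⟨1, one_pos, fun x => by simp [Subsingleton.elim x 0]⟩
  let Bc : V →L[ℝ] V →L[ℝ] ℝ :=
    LinearMap.toContinuousLinearMap (LinearMap.toContinuousLinearMap.toLinearMap ∘ₗ B)
  have hcont : Continuous fun x => B x x :=
    Bc.continuous₂.comp (continuous_id.prodMk continuous_id)
  obtain ⟨u, hu, hmin⟩ := (isCompact_sphere (0 : V) 1).exists_isMinOn
    (NormedSpace.sphere_nonempty.mpr zero_le_one) hcont.continuousOn
  refine ⟨B u u, hB u (ne_zero_of_mem_unit_sphere ⟨u, hu⟩), fun x => ?_⟩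
  rcases eq_or_ne x 0 with rfl | hx
  · simp
  have hx' : ‖x‖⁻¹ • x ∈ Metric.sphere (0 : V) 1 := by simp [norm_smul, hx]
  have h : B u u ≤ B (‖x‖⁻¹ • x) (‖x‖⁻¹ • x) := hmin hx'
  simp only [map_smul, LinearMap.smul_apply, smul_eq_mul] at h
  rwa [← mul_assoc, ← mul_inv, ← sq, inv_mul_eq_div, le_div_iff₀ (by positivity)] at h

theorem exists_pos_mul_norm_sq_le_of_mem (B : LinearMap.BilinForm ℝ V) {W : Submodule ℝ V}
    (hB : ∀ x ∈ W, x ≠ 0 → 0 < B x x) : ∃ c > 0, ∀ x ∈ W, c * ‖x‖ ^ 2 ≤ B x x := by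
  obtain ⟨c, hc, h⟩ := (B.restrict W).exists_pos_mul_norm_sq_le fun x hx =>
    hB x x.2 (by simpa using hx)
  exact ⟨c, hc, fun x hx => h ⟨x, hx⟩⟩

end LinearMap.BilinForm

/- In the application `m` and `k` are the block-diagonal forms of the `Mᵢ` and `Kᵢ`, and `N` is the
constraint space `{z | ∑ᵢ Cᵢ zᵢ = 0}`. -/
namespace TrapezoidalScheme

section Algebraic

variable {V : Type*} [AddCommGroup V] [Module ℝ V]

def weightedRate (γ : ℝ) (v : ℕ → V) (n : ℕ) : V := (1 - γ) • v n + γ • v (n + 1)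

variable {m k : LinearMap.BilinForm ℝ V} {N : Submodule ℝ V} {Δt γ : ℝ} {d v : ℕ → V}

theorem weightedRate_mem (hΔt : Δt ≠ 0) (hd : ∀ n, d n ∈ N)
    (hupd : ∀ n, d (n + 1) = d n + Δt • weightedRate γ v n) (n : ℕ) :
    weightedRate γ v n ∈ N := by
  have h : weightedRate γ v n = Δt⁻¹ • (d (n + 1) - d n) := by
    rw [hupd, add_sub_cancel_left, inv_smul_smul₀ hΔt]
  exact h ▸ N.smul_mem _ (N.sub_mem (hd _) (hd _))

theorem apply_weightedRate_add_apply_eq_zero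
    (hweak : ∀ n, ∀ z ∈ N, m z (v n) + k z (d n) = 0) (n : ℕ) {z : V} (hz : z ∈ N) :
    m z (weightedRate γ v n) + k z ((1 - γ) • d n + γ • d (n + 1)) = 0 := by
  have h₀ := hweak n z hz
  have h₁ := hweak (n + 1) z hz
  simp only [weightedRate, map_add, map_smul, smul_eq_mul]
  linear_combination (1 - γ) * h₀ + γ * h₁

theorem energy_identity (hk : k.IsSymm) (hΔt : Δt ≠ 0) (hd : ∀ n, d n ∈ N)
    (hupd : ∀ n, d (n + 1) = d n + Δt • weightedRate γ v n)
    (hweak : ∀ n, ∀ z ∈ N, m z (v n) + k z (d n) = 0) (n : ℕ) :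
    Δt * (m + ((γ - 1 / 2) * Δt) • k) (weightedRate γ v n) (weightedRate γ v n)
      = (k (d n) (d n) - k (d (n + 1)) (d (n + 1))) / 2 := by
  have h := apply_weightedRate_add_apply_eq_zero (γ := γ) hweak n (weightedRate_mem hΔt hd hupd n)
  have hsymm := hk.eq (d n) (weightedRate γ v n)
  rw [hupd n] at h ⊢
  simp only [map_add, map_smul, LinearMap.add_apply, LinearMap.smul_apply, smul_eq_mul] at h ⊢
  linear_combination Δt * h + (Δt / 2) * hsymm

theorem energy_antitone (hk : k.IsSymm) (hΔt : 0 < Δt) (hd : ∀ n, d n ∈ N)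
    (ha : ∀ x ∈ N, 0 ≤ (m + ((γ - 1 / 2) * Δt) • k) x x)
    (hupd : ∀ n, d (n + 1) = d n + Δt • weightedRate γ v n)
    (hweak : ∀ n, ∀ z ∈ N, m z (v n) + k z (d n) = 0) :
    Antitone fun n => k (d n) (d n) := by
  refine antitone_nat_of_succ_le fun n => ?_
  have h := energy_identity hk hΔt.ne' hd hupd hweak n
  have := mul_nonneg hΔt.le (ha _ (weightedRate_mem hΔt.ne' hd hupd n))
  linarith

theorem apply_eq_apply_zero_of_mem_ker
    (hupd : ∀ n, d (n + 1) = d n + Δt • weightedRate γ v n)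
    (hweak : ∀ n, ∀ z ∈ N, m z (v n) + k z (d n) = 0)
    {z : V} (hzN : z ∈ N) (hzk : z ∈ LinearMap.ker k) (n : ℕ) : m z (d n) = m z (d 0) := by
  induction n with
  | zero => rfl
  | succ n ih =>
    have h := apply_weightedRate_add_apply_eq_zero (γ := γ) hweak n hzN
    rw [LinearMap.mem_ker.mp hzk, LinearMap.zero_apply, add_zero] at h
    rw [hupd, map_add, map_smul, h, smul_zero, add_zero, ih]

end Algebraic

section Bounds

variable {V : Type*} [NormedAddCommGroup V] [NormedSpace ℝ V] [FiniteDimensional ℝ V]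
  {m k : LinearMap.BilinForm ℝ V} {N : Submodule ℝ V} {Δt γ : ℝ} {d v : ℕ → V}

theorem exists_norm_weightedRate_le (hk : k.IsSymm) (hk₀ : ∀ x, 0 ≤ k x x) (hΔt : 0 < Δt)
    (ha : ∀ x ∈ N, x ≠ 0 → 0 < (m + ((γ - 1 / 2) * Δt) • k) x x) (hd : ∀ n, d n ∈ N)
    (hupd : ∀ n, d (n + 1) = d n + Δt • weightedRate γ v n)
    (hweak : ∀ n, ∀ z ∈ N, m z (v n) + k z (d n) = 0) :
    ∃ R, ∀ n, ‖weightedRate γ v n‖ ≤ R := by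
  obtain ⟨c, hc, hcoer⟩ := (m + ((γ - 1 / 2) * Δt) • k).exists_pos_mul_norm_sq_le_of_mem ha
  have ha₀ : ∀ x ∈ N, 0 ≤ (m + ((γ - 1 / 2) * Δt) • k) x x := fun x hx => by
    rcases eq_or_ne x 0 with rfl | hx₀
    · simp
    · exact (ha x hx hx₀).le
  refine ⟨√(k (d 0) (d 0) / (2 * Δt) / c), fun n => ?_⟩
  have hw := weightedRate_mem hΔt.ne' hd hupd n
  have hstep := energy_identity hk hΔt.ne' hd hupd hweak n
  have hE : k (d n) (d n) ≤ k (d 0) (d 0) :=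
    energy_antitone hk hΔt hd ha₀ hupd hweak (Nat.zero_le n)
  have hE₁ := hk₀ (d (n + 1))
  have hcoer' := mul_le_mul_of_nonneg_left (hcoer _ hw) hΔt.le
  rw [← abs_norm]
  refine Real.abs_le_sqrt ?_
  rw [le_div_iff₀ hc, le_div_iff₀ (by positivity)]
  linarith

theorem exists_norm_le (hk : k.IsSymm) (hk₀ : ∀ x, 0 ≤ k x x)
    (hm : ∀ x ∈ N, x ≠ 0 → 0 < m x x) (hΔt : 0 < Δt)
    (ha : ∀ x ∈ N, 0 ≤ (m + ((γ - 1 / 2) * Δt) • k) x x) (hd : ∀ n, d n ∈ N)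
    (hupd : ∀ n, d (n + 1) = d n + Δt • weightedRate γ v n)
    (hweak : ∀ n, ∀ z ∈ N, m z (v n) + k z (d n) = 0) :
    ∃ R, ∀ n, ‖d n‖ ≤ R := by
  set W := N ⊓ m.orthogonal (N ⊓ LinearMap.ker k)
  have hkW : ∀ x ∈ W, x ≠ 0 → 0 < k x x := by
    rintro x ⟨hxN, hxo⟩ hx
    refine (hk₀ x).lt_of_ne fun h₀ => ?_
    have hxk : x ∈ LinearMap.ker k :=
      (k.apply_apply_same_eq_zero_iff hk₀ (LinearMap.BilinForm.isSymm_iff.mp hk)).mp h₀.symm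
    exact (hm x hxN hx).ne' (hxo x ⟨hxN, hxk⟩)
  obtain ⟨c, hc, hcoer⟩ := k.exists_pos_mul_norm_sq_le_of_mem hkW
  have hmem : ∀ n, d n - d 0 ∈ W := fun n =>
    ⟨N.sub_mem (hd n) (hd 0), fun z ⟨hzN, hzk⟩ => by
      rw [map_sub, apply_eq_apply_zero_of_mem_ker hupd hweak hzN hzk, sub_self]⟩
  refine ⟨‖d 0‖ + √(4 * k (d 0) (d 0) / c), fun n => ?_⟩
  have hE : k (d n) (d n) ≤ k (d 0) (d 0) :=
    energy_antitone hk hΔt hd ha hupd hweak (Nat.zero_le n)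
  -- `k (x - y) ≤ 2 k x + 2 k y` because `k (x + y) ≥ 0`
  have hsum := hk₀ (d n + d 0)
  have hdiff : ‖d n - d 0‖ ≤ √(4 * k (d 0) (d 0) / c) := by
    rw [← abs_norm]
    refine Real.abs_le_sqrt ((le_div_iff₀' hc).mpr ((hcoer _ (hmem n)).trans ?_))
    simp only [map_add, map_sub, LinearMap.add_apply, LinearMap.sub_apply] at hsum ⊢
    linarith [hk.eq (d n) (d 0)]
  calc ‖d n‖ = ‖d 0 + (d n - d 0)‖ := by rw [add_sub_cancel]
    _ ≤ ‖d 0‖ + √(4 * k (d 0) (d 0) / c) := (norm_add_le _ _).trans (add_le_add_right hdiff _)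

end Bounds

end TrapezoidalScheme

section BlockMatrices

variable {ι : Type*} [Fintype ι] {κ : ι → Type*} [∀ i, Fintype (κ i)] {μ : Type*}

def blockRow (C : ∀ i, Matrix μ (κ i) ℝ) : (∀ i, κ i → ℝ) →ₗ[ℝ] (μ → ℝ) :=
  ∑ i, (C i).mulVecLin ∘ₗ LinearMap.proj i

theorem blockRow_apply (C : ∀ i, Matrix μ (κ i) ℝ) (y : ∀ i, κ i → ℝ) :
    blockRow C y = ∑ i, C i *ᵥ y i := by
  simp [blockRow]

variable [∀ i, DecidableEq (κ i)]

def blockForm (M : ∀ i, Matrix (κ i) (κ i) ℝ) : LinearMap.BilinForm ℝ (∀ i, κ i → ℝ) :=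
  ∑ i, (Matrix.toLinearMap₂' ℝ (M i)).compl₁₂ (LinearMap.proj i) (LinearMap.proj i)

theorem blockForm_apply (M : ∀ i, Matrix (κ i) (κ i) ℝ) (z y : ∀ i, κ i → ℝ) :
    blockForm M z y = ∑ i, z i ⬝ᵥ M i *ᵥ y i := by
  simp [blockForm, Matrix.toLinearMap₂'_apply']

theorem blockForm_add_smul (M K : ∀ i, Matrix (κ i) (κ i) ℝ) (s : ℝ) :
    blockForm (fun i => M i + s • K i) = blockForm M + s • blockForm K := by
  ext z y
  simp only [blockForm_apply, LinearMap.add_apply, LinearMap.smul_apply, smul_eq_mul,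
    Matrix.add_mulVec, Matrix.smul_mulVec, dotProduct_add, dotProduct_smul,
    Finset.sum_add_distrib, Finset.mul_sum]

theorem blockForm_isSymm {M : ∀ i, Matrix (κ i) (κ i) ℝ} (hM : ∀ i, (M i).IsHermitian) :
    (blockForm M).IsSymm := by
  refine ⟨fun z y => ?_⟩
  simp only [blockForm_apply]
  refine Finset.sum_congr rfl fun i _ => ?_
  rw [dotProduct_mulVec, ← mulVec_transpose, ← conjTranspose_eq_transpose_of_trivial, (hM i).eq,
    dotProduct_comm]

theorem blockForm_self_nonneg {M : ∀ i, Matrix (κ i) (κ i) ℝ} (hM : ∀ i, (M i).PosSemidef)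
    (x : ∀ i, κ i → ℝ) : 0 ≤ blockForm M x x := by
  rw [blockForm_apply]
  exact Finset.sum_nonneg fun i _ => by simpa using (hM i).dotProduct_mulVec_nonneg (x i)

theorem blockForm_self_pos {M : ∀ i, Matrix (κ i) (κ i) ℝ} (hM : ∀ i, (M i).PosDef)
    {x : ∀ i, κ i → ℝ} (hx : x ≠ 0) : 0 < blockForm M x x := by
  obtain ⟨i, hi⟩ := Function.ne_iff.mp hx
  rw [blockForm_apply]
  refine Finset.sum_pos' (fun j _ => ?_) ⟨i, Finset.mem_univ i, ?_⟩
  · simpa using (hM j).posSemidef.dotProduct_mulVec_nonneg (x j)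
  · simpa using (hM i).dotProduct_mulVec_pos hi

theorem blockForm_add_blockForm_eq_zero_of_mem_ker [Fintype μ] {M K : ∀ i, Matrix (κ i) (κ i) ℝ}
    {C : ∀ i, Matrix μ (κ i) ℝ} {v d : ∀ i, κ i → ℝ} {l : μ → ℝ}
    (h : ∀ i, M i *ᵥ v i + K i *ᵥ d i = (C i)ᵀ *ᵥ l) {z : ∀ i, κ i → ℝ}
    (hz : z ∈ LinearMap.ker (blockRow C)) : blockForm M z v + blockForm K z d = 0 := by
  rw [LinearMap.mem_ker, blockRow_apply] at hz
  calc blockForm M z v + blockForm K z d = ∑ i, z i ⬝ᵥ (C i)ᵀ *ᵥ l := by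
        simp only [blockForm_apply, ← Finset.sum_add_distrib, ← dotProduct_add, h]
    _ = (∑ i, C i *ᵥ z i) ⬝ᵥ l := by
        simp only [Matrix.dotProduct_mulVec, Matrix.vecMul_transpose, ← sum_dotProduct]
    _ = 0 := by rw [hz, zero_dotProduct]

end BlockMatrices

theorem enorm_le_sqrt_mul_norm {k : ℕ} (x : Fin k → ℝ) : _root_.enorm x ≤ √k * ‖x‖ := by
  have h : x ⬝ᵥ x ≤ k * ‖x‖ ^ 2 :=
    calc x ⬝ᵥ x = ∑ j, ‖x j‖ ^ 2 := by simp [dotProduct, sq]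
      _ ≤ ∑ _j : Fin k, ‖x‖ ^ 2 :=
        Finset.sum_le_sum fun j _ => pow_le_pow_left₀ (norm_nonneg _) (norm_le_pi_norm x j) 2
      _ = k * ‖x‖ ^ 2 := by simp
  rw [_root_.enorm, ← Real.sqrt_sq (norm_nonneg x), ← Real.sqrt_mul (Nat.cast_nonneg k)]
  exact Real.sqrt_le_sqrt h

theorem exists_pos_enorm_apply_le {ι : Type*} [Fintype ι] {nn : ι → ℕ}
    {x : ℕ → ∀ i, Fin (nn i) → ℝ} {R : ℝ} (hx : ∀ n, ‖x n‖ ≤ R) :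
    ∃ C₀ > (0 : ℝ), ∀ i n, _root_.enorm (x n i) ≤ C₀ := by
  refine ⟨√(∑ j, (nn j : ℝ)) * |R| + 1, by positivity, fun i n => ?_⟩
  calc _root_.enorm (x n i) ≤ √(nn i) * ‖x n i‖ := enorm_le_sqrt_mul_norm _
    _ ≤ √(∑ j, (nn j : ℝ)) * |R| := by
      gcongr
      · exact Finset.single_le_sum (fun j _ => Nat.cast_nonneg (nn j)) (Finset.mem_univ i)
      · exact (norm_le_pi_norm (x n) i).trans ((hx n).trans (le_abs_self R))
    _ ≤ √(∑ j, (nn j : ℝ)) * |R| + 1 := le_add_of_nonneg_right zero_le_one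

theorem dContinuity_temperatures_and_weighted_rates_bounded_general
    (S m : ℕ) (nn : Fin S → ℕ)
    (M K : ∀ i : Fin S, Matrix (Fin (nn i)) (Fin (nn i)) ℝ)
    (hM : ∀ i, (M i).PosDef) (hK : ∀ i, (K i).PosSemidef)
    (C : ∀ i : Fin S, Matrix (Fin m) (Fin (nn i)) ℝ)
    (Δt γ : ℝ) (hΔt : 0 < Δt)
    (hA : ∀ i, (M i + ((γ - 1/2) * Δt) • K i).PosDef)
    (d v : ∀ i : Fin S, ℕ → (Fin (nn i) → ℝ)) (lam : ℕ → (Fin m → ℝ))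
    (heq : ∀ i n, (M i).mulVec (v i n) + (K i).mulVec (d i n) = (C i)ᵀ.mulVec (lam n))
    (hupd : ∀ i n, d i (n + 1) = d i n + Δt • ((1 - γ) • v i n + γ • v i (n + 1)))
    (hcont : ∀ n, ∑ i : Fin S, (C i).mulVec (d i n) = 0) :
    ∃ C₀ > (0 : ℝ), ∀ i : Fin S, ∀ n : ℕ,
      _root_.enorm (d i n) ≤ C₀ ∧ _root_.enorm ((1 - γ) • v i n + γ • v i (n + 1)) ≤ C₀ := by
  set D : ℕ → ∀ i, Fin (nn i) → ℝ := fun n i => d i n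
  set Vel : ℕ → ∀ i, Fin (nn i) → ℝ := fun n i => v i n
  have hA' := blockForm_add_smul M K ((γ - 1 / 2) * Δt)
  have hk := blockForm_isSymm fun i => (hK i).isHermitian
  have hk₀ := blockForm_self_nonneg hK
  have hd : ∀ n, D n ∈ LinearMap.ker (blockRow C) :=
    fun n => LinearMap.mem_ker.mpr ((blockRow_apply C (D n)).trans (hcont n))
  have hupd' : ∀ n, D (n + 1) = D n + Δt • TrapezoidalScheme.weightedRate γ Vel n :=
    fun n => funext (hupd · n)
  have hweak : ∀ n, ∀ z ∈ LinearMap.ker (blockRow C),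
      blockForm M z (Vel n) + blockForm K z (D n) = 0 :=
    fun n _ => blockForm_add_blockForm_eq_zero_of_mem_ker (heq · n)
  obtain ⟨Rd, hRd⟩ := TrapezoidalScheme.exists_norm_le hk hk₀ (fun _ _ => blockForm_self_pos hM)
    hΔt (fun x _ => hA' ▸ blockForm_self_nonneg (fun i => (hA i).posSemidef) x) hd hupd' hweak
  obtain ⟨Rw, hRw⟩ := TrapezoidalScheme.exists_norm_weightedRate_le hk hk₀ hΔt
    (fun _ _ hx => hA' ▸ blockForm_self_pos hA hx) hd hupd' hweak
  obtain ⟨Cd, hCd, hd'⟩ := exists_pos_enorm_apply_le hRd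
  obtain ⟨Cw, -, hw'⟩ := exists_pos_enorm_apply_le hRw
  exact ⟨max Cd Cw, lt_max_of_lt_left hCd,
    fun i n => ⟨(hd' i n).trans (le_max_left _ _), (hw' i n).trans (le_max_right _ _)⟩⟩

/-- Under the d-continuity domain decomposition method, if each
`Aᵢ = Mᵢ + (γ - 1/2)·Δt·Kᵢ` is positive definite, then the temperatures `dᵢ(n)` and the
weighted rates `(1-γ)·vᵢ(n) + γ·vᵢ(n+1)` are bounded uniformly in `i` and `n`. -/
theorem dContinuity_temperatures_and_weighted_rates_bounded
    (S m : ℕ) (hS : 1 ≤ S) (nn : Fin S → ℕ)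
    (M K : ∀ i : Fin S, Matrix (Fin (nn i)) (Fin (nn i)) ℝ)
    (hM : ∀ i, (M i).PosDef) (hK : ∀ i, (K i).PosSemidef)
    (C : ∀ i : Fin S, Matrix (Fin m) (Fin (nn i)) ℝ)
    (Δt γ : ℝ) (hΔt : 0 < Δt) (hγ₀ : 0 ≤ γ) (hγ₁ : γ ≤ 1)
    (hA : ∀ i, (M i + ((γ - 1/2) * Δt) • K i).PosDef)
    (d v : ∀ i : Fin S, ℕ → (Fin (nn i) → ℝ)) (lam : ℕ → (Fin m → ℝ))
    (heq : ∀ i n, (M i).mulVec (v i n) + (K i).mulVec (d i n) = (C i)ᵀ.mulVec (lam n))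
    (hupd : ∀ i n, d i (n + 1) = d i n + Δt • ((1 - γ) • v i n + γ • v i (n + 1)))
    (hcont : ∀ n, ∑ i : Fin S, (C i).mulVec (d i n) = 0) :
    ∃ C₀ > (0 : ℝ), ∀ i : Fin S, ∀ n : ℕ,
      _root_.enorm (d i n) ≤ C₀ ∧ _root_.enorm ((1 - γ) • v i n + γ • v i (n + 1)) ≤ C₀ :=
  dContinuity_temperatures_and_weighted_rates_bounded_general S m nn M K hM hK C Δt γ hΔt hA d v lam
    heq hupd hcont
end

section
/- Under the d-continuity domain decomposition method with linearly independent constraints, the weighted Lagrange multipliers are determined explicitly by the temperatures: for every n ∈ ℕ, (1−γ)·λ(n) + γ·λ(n+1) = −(1/Δt)·G⁻¹·∑_{i=1}^S C_i·M̃_i⁻¹·(M_i − (1−γ)·Δt·K_i)·d_i(n), where M̃_i := M_i + γ·Δt·K_i and G := ∑_{i=1}^S C_i·M̃_i⁻¹·C_iᵀ. -/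
/-!
Averaging the subdomain equations at times `n` and `n + 1` with weights `1 - γ`, `γ` and
using the trapezoidal update gives `M̃ᵢ dᵢ(n+1) = (Mᵢ - (1-γ)Δt Kᵢ) dᵢ(n) + Δt Cᵢᵀ w` with
`w = (1-γ) λ(n) + γ λ(n+1)`. Solving for `dᵢ(n+1)` and summing `Cᵢ dᵢ(n+1) = 0` yields
`Δt G w = -∑ᵢ Cᵢ M̃ᵢ⁻¹ (Mᵢ - (1-γ)Δt Kᵢ) dᵢ(n)`, and `G` is invertible, being positive definite:
each `M̃ᵢ⁻¹` is, and the `Cᵢᵀ` have no common kernel.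
-/

open Matrix

theorem Matrix.posDef_sum_of_posSemidef {ι n R : Type*} [Fintype ι] [Fintype n]
    [Ring R] [PartialOrder R] [StarRing R] [IsOrderedAddMonoid R] {P : ι → Matrix n n R}
    (hP : ∀ i, (P i).PosSemidef) (hpos : ∀ x ≠ 0, ∃ i, 0 < star x ⬝ᵥ P i *ᵥ x) :
    (∑ i, P i).PosDef := by
  refine .of_dotProduct_mulVec_pos (posSemidef_sum _ fun i _ => hP i).isHermitian fun x hx => ?_
  obtain ⟨i, hi⟩ := hpos x hx
  rw [sum_mulVec, dotProduct_sum]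
  exact Finset.sum_pos' (fun j _ => (hP j).dotProduct_mulVec_nonneg x) ⟨i, Finset.mem_univ _, hi⟩

theorem Matrix.posDef_sum_mul_mul_transpose {ι m : Type*} [Fintype ι] [Fintype m]
    {n : ι → Type*} [∀ i, Fintype (n i)] {A : ∀ i, Matrix (n i) (n i) ℝ}
    (hA : ∀ i, (A i).PosDef) {C : ∀ i, Matrix m (n i) ℝ}
    (hC : ∀ μ, (∀ i, (C i)ᵀ *ᵥ μ = 0) → μ = 0) :
    (∑ i, C i * A i * (C i)ᵀ).PosDef := by
  refine posDef_sum_of_posSemidef (fun i => (hA i).posSemidef.mul_mul_conjTranspose_same (C i))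
    fun x hx => ?_
  obtain ⟨i, hi⟩ : ∃ i, (C i)ᵀ *ᵥ x ≠ 0 := by
    by_contra! h
    exact hx (hC x h)
  refine ⟨i, ?_⟩
  convert (hA i).dotProduct_mulVec_pos hi using 1
  rw [← mulVec_mulVec, ← mulVec_mulVec, dotProduct_mulVec, star_trivial, star_trivial,
    ← mulVec_transpose]

theorem trapezoidal_step_mulVec {n k R : Type*} [Fintype n] [Fintype k] [CommRing R]
    (M K : Matrix n n R) (B : Matrix n k R) (Δt γ : R) {d₀ d₁ v₀ v₁ : n → R} {l₀ l₁ : k → R}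
    (h₀ : M *ᵥ v₀ + K *ᵥ d₀ = B *ᵥ l₀) (h₁ : M *ᵥ v₁ + K *ᵥ d₁ = B *ᵥ l₁)
    (hd : d₁ = d₀ + Δt • ((1 - γ) • v₀ + γ • v₁)) :
    (M + (γ * Δt) • K) *ᵥ d₁ =
      (M - ((1 - γ) * Δt) • K) *ᵥ d₀ + Δt • (B *ᵥ ((1 - γ) • l₀ + γ • l₁)) := by
  have hv₀ : M *ᵥ v₀ = B *ᵥ l₀ - K *ᵥ d₀ := eq_sub_of_add_eq h₀
  have hv₁ : M *ᵥ v₁ = B *ᵥ l₁ - K *ᵥ d₁ := eq_sub_of_add_eq h₁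
  rw [add_mulVec, sub_mulVec, smul_mulVec, smul_mulVec]
  nth_rewrite 1 [hd]
  rw [mulVec_add, mulVec_smul, mulVec_add, mulVec_smul, mulVec_smul, hv₀, hv₁, mulVec_add,
    mulVec_smul, mulVec_smul]
  module

theorem Matrix.mulVec_eq_mul_inv_mulVec {n k R : Type*} [Fintype n] [DecidableEq n] [CommRing R]
    {A : Matrix n n R} (hA : IsUnit A.det) (C : Matrix k n R) {x y : n → R}
    (h : A *ᵥ x = y) : C *ᵥ x = (C * A⁻¹) *ᵥ y := by
  rw [← h, mulVec_mulVec, Matrix.mul_assoc, nonsing_inv_mul _ hA, Matrix.mul_one]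

theorem Matrix.eq_smul_inv_mulVec_of_add_smul_mulVec_eq_zero {n K : Type*} [Fintype n]
    [DecidableEq n] [Field K] {G : Matrix n n K} (hG : IsUnit G.det) {c : K} (hc : c ≠ 0)
    {r w : n → K} (h : r + c • (G *ᵥ w) = 0) : w = (-(1 / c)) • G⁻¹ *ᵥ r := by
  rw [eq_neg_of_add_eq_zero_left h, mulVec_neg, mulVec_smul, mulVec_mulVec, nonsing_inv_mul _ hG,
    one_mulVec, smul_neg, neg_smul, neg_neg, smul_smul, one_div, inv_mul_cancel₀ hc, one_smul]

theorem dContinuity_lagrange_multiplier_formula_general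
    (S m : ℕ) (nn : Fin S → ℕ)
    (M K : ∀ i : Fin S, Matrix (Fin (nn i)) (Fin (nn i)) ℝ)
    (hM : ∀ i, (M i).PosDef) (hK : ∀ i, (K i).PosSemidef)
    (C : ∀ i : Fin S, Matrix (Fin m) (Fin (nn i)) ℝ)
    (Δt γ : ℝ) (hΔt : 0 < Δt) (hγ₀ : 0 ≤ γ)
    (d v : ∀ i : Fin S, ℕ → (Fin (nn i) → ℝ)) (lam : ℕ → (Fin m → ℝ))
    (heq : ∀ i n, (M i).mulVec (v i n) + (K i).mulVec (d i n) = (C i)ᵀ.mulVec (lam n))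
    (hupd : ∀ i n, d i (n + 1) = d i n + Δt • ((1 - γ) • v i n + γ • v i (n + 1)))
    (hcont : ∀ n, ∑ i : Fin S, (C i).mulVec (d i n) = 0)
    (hind : ∀ μ : Fin m → ℝ, (∀ i, (C i)ᵀ.mulVec μ = 0) → μ = 0) :
    ∀ n : ℕ,
      (1 - γ) • lam n + γ • lam (n + 1) =
        (-(1 / Δt)) •
          (∑ i : Fin S, C i * (M i + (γ * Δt) • K i)⁻¹ * (C i)ᵀ)⁻¹.mulVec
            (∑ i : Fin S,
              (C i * (M i + (γ * Δt) • K i)⁻¹ *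
                (M i - ((1 - γ) * Δt) • K i)).mulVec (d i n)) := by
  intro n
  have hMt : ∀ i, (M i + (γ * Δt) • K i).PosDef := fun i =>
    (hM i).add_posSemidef ((hK i).smul (by positivity))
  have hG := posDef_sum_mul_mul_transpose (fun i => (hMt i).inv) hind
  refine eq_smul_inv_mulVec_of_add_smul_mulVec_eq_zero hG.det_pos.ne'.isUnit hΔt.ne' ?_
  rw [← hcont (n + 1), sum_mulVec, Finset.smul_sum, ← Finset.sum_add_distrib]
  refine Finset.sum_congr rfl fun i _ => ?_
  rw [mulVec_eq_mul_inv_mulVec (hMt i).det_pos.ne'.isUnit (C i)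
    (trapezoidal_step_mulVec _ _ _ Δt γ (heq i n) (heq i (n + 1)) (hupd i n))]
  simp only [mulVec_add, mulVec_smul, mulVec_mulVec, Matrix.mul_assoc]

/-- Under the d-continuity domain decomposition method with linearly independent
constraints, the weighted Lagrange multipliers are explicitly determined by the
temperatures:
`(1-γ)·λ(n) + γ·λ(n+1) = -(1/Δt)·G⁻¹·∑ᵢ Cᵢ·M̃ᵢ⁻¹·(Mᵢ - (1-γ)·Δt·Kᵢ)·dᵢ(n)`,
where `M̃ᵢ = Mᵢ + γ·Δt·Kᵢ` and `G = ∑ᵢ Cᵢ·M̃ᵢ⁻¹·Cᵢᵀ`. -/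
theorem dContinuity_lagrange_multiplier_formula
    (S m : ℕ) (hS : 1 ≤ S) (nn : Fin S → ℕ)
    (M K : ∀ i : Fin S, Matrix (Fin (nn i)) (Fin (nn i)) ℝ)
    (hM : ∀ i, (M i).PosDef) (hK : ∀ i, (K i).PosSemidef)
    (C : ∀ i : Fin S, Matrix (Fin m) (Fin (nn i)) ℝ)
    (Δt γ : ℝ) (hΔt : 0 < Δt) (hγ₀ : 0 ≤ γ) (hγ₁ : γ ≤ 1)
    (d v : ∀ i : Fin S, ℕ → (Fin (nn i) → ℝ)) (lam : ℕ → (Fin m → ℝ))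
    (heq : ∀ i n, (M i).mulVec (v i n) + (K i).mulVec (d i n) = (C i)ᵀ.mulVec (lam n))
    (hupd : ∀ i n, d i (n + 1) = d i n + Δt • ((1 - γ) • v i n + γ • v i (n + 1)))
    (hcont : ∀ n, ∑ i : Fin S, (C i).mulVec (d i n) = 0)
    (hind : ∀ μ : Fin m → ℝ, (∀ i, (C i)ᵀ.mulVec μ = 0) → μ = 0) :
    ∀ n : ℕ,
      (1 - γ) • lam n + γ • lam (n + 1) =
        (-(1 / Δt)) •
          (∑ i : Fin S, C i * (M i + (γ * Δt) • K i)⁻¹ * (C i)ᵀ)⁻¹.mulVec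
            (∑ i : Fin S,
              (C i * (M i + (γ * Δt) • K i)⁻¹ *
                (M i - ((1 - γ) * Δt) • K i)).mulVec (d i n)) :=
  dContinuity_lagrange_multiplier_formula_general S m nn M K hM hK C Δt γ hΔt hγ₀ d v lam heq hupd
    hcont hind
end

section
/- Stability of the modified d-continuity method: under the modified d-continuity domain decomposition method with linearly independent constraints, trapezoidal parameter 0 < γ ≤ 1, and each A_i := M_i + (γ − 1/2)·Δt·K_i positive definite, all quantities are bounded: there exists a constant C > 0 such that for all i ∈ {1,…,S} and all n ∈ ℕ, ‖d_i(n)‖ ≤ C, ‖w_i(n)‖ ≤ C, and ‖μ(n)‖ ≤ C. Consequently, the interpolated integer-level rates γ·w_i(n) + (1−γ)·w_i(n+1) and multipliers γ·μ(n) + (1−γ)·μ(n+1) are also bounded. -/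
open Matrix

noncomputable def euclidEnorm {k : ℕ} (x : Fin k → ℝ) : ℝ := Real.sqrt (x ⬝ᵥ x)

/-! Writing `Aᵢ = Mᵢ + (γ - 1/2) Δt Kᵢ`, the scheme reads
`Aᵢ wᵢ(n) + Kᵢ (dᵢ(n) + dᵢ(n+1)) / 2 = Cᵢᵀ μ(n)`. The constraint forces `Cᵢᵀ μ` do no work on
any combination of the `dᵢ(n)`, so testing the equation with `dᵢ(n) + dᵢ(n+1)` shows that
`∑ dᵢᵀ Aᵢ dᵢ` is nonincreasing, and testing it with `wᵢ(n)` shows that `∑ dᵢᵀ Kᵢ dᵢ` drops by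
`2 Δt ∑ wᵢᵀ Aᵢ wᵢ` in each step. Positive definiteness of the `Aᵢ` turns these two energy estimates
into bounds on `d` and `w`, hence on the forces `Cᵢᵀ μ`; linear independence of the constraints
makes `∑ Cᵢ Cᵢᵀ` positive definite, which bounds `μ`. -/

open scoped Matrix.Norms.L2Operator MatrixOrder

section EuclideanBounds

variable {k l : ℕ}

lemma euclidEnorm_eq_norm (x : Fin k → ℝ) : euclidEnorm x = ‖WithLp.toLp 2 x‖ := by
  rw [euclidEnorm, norm_eq_sqrt_real_inner, EuclideanSpace.inner_toLp_toLp, star_trivial]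

lemma sq_euclidEnorm (x : Fin k → ℝ) : euclidEnorm x ^ 2 = x ⬝ᵥ x :=
  Real.sq_sqrt (Fintype.sum_nonneg fun _ => mul_self_nonneg _)

lemma euclidEnorm_add_le (x y : Fin k → ℝ) :
    euclidEnorm (x + y) ≤ euclidEnorm x + euclidEnorm y := by
  simpa only [euclidEnorm_eq_norm, WithLp.toLp_add] using norm_add_le _ _

lemma euclidEnorm_mulVec_le (B : Matrix (Fin l) (Fin k) ℝ) (x : Fin k → ℝ) :
    euclidEnorm (B *ᵥ x) ≤ ‖B‖ * euclidEnorm x := by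
  rw [euclidEnorm_eq_norm, euclidEnorm_eq_norm]
  exact B.l2_opNorm_mulVec (WithLp.toLp 2 x)

lemma euclidEnorm_add_smul_le {x y : Fin k → ℝ} {a b r : ℝ} (ha : 0 ≤ a) (hb : 0 ≤ b)
    (hab : a + b = 1) (hx : euclidEnorm x ≤ r) (hy : euclidEnorm y ≤ r) :
    euclidEnorm (a • x + b • y) ≤ r := by
  simp only [euclidEnorm_eq_norm, ← mem_closedBall_zero_iff] at hx hy ⊢
  exact convex_closedBall (0 : EuclideanSpace ℝ (Fin k)) r hx hy ha hb hab

lemma Matrix.PosDef.exists_euclidEnorm_sq_le {A : Matrix (Fin k) (Fin k) ℝ} (hA : A.PosDef) :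
    ∃ c ≥ 0, ∀ x, euclidEnorm x ^ 2 ≤ c * (x ⬝ᵥ A *ᵥ x) := by
  obtain ⟨B, rfl⟩ := CStarAlgebra.nonneg_iff_eq_star_mul_self.mp hA.posSemidef.nonneg
  have hB : IsUnit B.det := by
    have := (isUnit_iff_isUnit_det _).1 hA.isUnit
    rw [det_mul] at this
    exact isUnit_of_mul_isUnit_right this
  refine ⟨‖B⁻¹‖ ^ 2, by positivity, fun x => ?_⟩
  have hq : x ⬝ᵥ (star B * B) *ᵥ x = euclidEnorm (B *ᵥ x) ^ 2 := by
    rw [sq_euclidEnorm, ← mulVec_mulVec, star_eq_conjTranspose,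
      conjTranspose_eq_transpose_of_trivial, dotProduct_transpose_mulVec]
  calc euclidEnorm x ^ 2 = euclidEnorm (B⁻¹ *ᵥ (B *ᵥ x)) ^ 2 := by
        rw [mulVec_mulVec, nonsing_inv_mul _ hB, one_mulVec]
    _ ≤ (‖B⁻¹‖ * euclidEnorm (B *ᵥ x)) ^ 2 := by
        gcongr
        · exact Real.sqrt_nonneg _
        · exact euclidEnorm_mulVec_le _ _
    _ = ‖B⁻¹‖ ^ 2 * (x ⬝ᵥ (star B * B) *ᵥ x) := by rw [hq]; ring

lemma Matrix.PosDef.exists_euclidEnorm_le {ι : Type*} {A : Matrix (Fin k) (Fin k) ℝ}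
    (hA : A.PosDef) {x : ι → Fin k → ℝ} {b : ℝ} (hb : ∀ j, x j ⬝ᵥ A *ᵥ x j ≤ b) :
    ∃ r, ∀ j, euclidEnorm (x j) ≤ r := by
  obtain ⟨c, hc, hcA⟩ := hA.exists_euclidEnorm_sq_le
  exact ⟨√(c * b), fun j => (le_abs_self _).trans <| Real.abs_le_sqrt <|
    (hcA (x j)).trans (mul_le_mul_of_nonneg_left (hb j) hc)⟩

end EuclideanBounds

lemma Finite.exists_forall_le_of_forall_exists_le {ι κ : Type*} [Finite ι] {f : ι → κ → ℝ}
    (h : ∀ i, ∃ r, ∀ j, f i j ≤ r) : ∃ r, ∀ i j, f i j ≤ r := by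
  choose r hr using h
  obtain ⟨R, hR⟩ := Finite.exists_le r
  exact ⟨R, fun i j => (hr i j).trans (hR i)⟩

section Gram

variable {ι : Type*} [Fintype ι] {m : ℕ} {nn : ι → ℕ} {C : ∀ i, Matrix (Fin m) (Fin (nn i)) ℝ}

lemma sum_dotProduct_transpose_mulVec_eq_zero {x : ∀ i, Fin (nn i) → ℝ}
    (hx : ∑ i, C i *ᵥ x i = 0) (ν : Fin m → ℝ) : ∑ i, x i ⬝ᵥ (C i)ᵀ *ᵥ ν = 0 := by
  simp only [dotProduct_transpose_mulVec, ← dotProduct_sum, hx, dotProduct_zero]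

lemma dotProduct_sum_mul_transpose_mulVec (ν : Fin m → ℝ) :
    ν ⬝ᵥ (∑ i, C i * (C i)ᵀ) *ᵥ ν = ∑ i, euclidEnorm ((C i)ᵀ *ᵥ ν) ^ 2 := by
  simp only [sum_mulVec, dotProduct_sum, ← mulVec_mulVec, sq_euclidEnorm]
  refine Finset.sum_congr rfl fun i _ => ?_
  rw [dotProduct_transpose_mulVec]

lemma posDef_sum_mul_transpose (hC : ∀ ν, (∀ i, (C i)ᵀ *ᵥ ν = 0) → ν = 0) :
    (∑ i, C i * (C i)ᵀ).PosDef := by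
  refine .of_dotProduct_mulVec_pos ?_ fun ν hν => ?_
  · rw [isHermitian_iff_isSymm, IsSymm, transpose_sum]
    simp only [transpose_mul, transpose_transpose]
  · rw [star_trivial, dotProduct_sum_mul_transpose_mulVec]
    refine (Finset.sum_nonneg fun i _ => sq_nonneg _).lt_of_ne fun h0 => hν (hC ν fun i => ?_)
    have hi := (Finset.sum_eq_zero_iff_of_nonneg fun i _ => sq_nonneg _).1 h0.symm i
      (Finset.mem_univ i)
    rwa [sq_euclidEnorm, dotProduct_self_eq_zero] at hi

lemma exists_euclidEnorm_le_of_transpose_mulVec {κ : Type*} {μ : κ → Fin m → ℝ}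
    (hC : ∀ ν, (∀ i, (C i)ᵀ *ᵥ ν = 0) → ν = 0)
    (hμ : ∀ i, ∃ r, ∀ j, euclidEnorm ((C i)ᵀ *ᵥ μ j) ≤ r) : ∃ r, ∀ j, euclidEnorm (μ j) ≤ r := by
  choose r hr using hμ
  refine (posDef_sum_mul_transpose hC).exists_euclidEnorm_le (b := ∑ i, r i ^ 2) fun j => ?_
  rw [dotProduct_sum_mul_transpose_mulVec]
  exact Finset.sum_le_sum fun i _ => pow_le_pow_left₀ (Real.sqrt_nonneg _) (hr i j) 2

end Gram

section Energy

variable {k : ℕ} {A K : Matrix (Fin k) (Fin k) ℝ}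

lemma Matrix.IsSymm.dotProduct_mulVec_comm_s8 (hA : A.IsSymm) (x y : Fin k → ℝ) :
    x ⬝ᵥ A *ᵥ y = y ⬝ᵥ A *ᵥ x := by
  simpa only [hA.eq] using dotProduct_transpose_mulVec A x y

lemma Matrix.IsSymm.dotProduct_mulVec_self_sub (hA : A.IsSymm) (x y : Fin k → ℝ) :
    y ⬝ᵥ A *ᵥ y - x ⬝ᵥ A *ᵥ x = (y - x) ⬝ᵥ A *ᵥ (x + y) := by
  simp only [mulVec_add, dotProduct_add, sub_dotProduct]
  rw [hA.dotProduct_mulVec_comm_s8 y x]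
  ring

variable {Δt : ℝ} {d d' w f : Fin k → ℝ}

lemma Matrix.IsSymm.midpoint_step_energy_sub (hA : A.IsSymm) (hd' : d' = d + Δt • w)
    (hf : A *ᵥ w + (2⁻¹ : ℝ) • K *ᵥ (d + d') = f) :
    d' ⬝ᵥ A *ᵥ d' - d ⬝ᵥ A *ᵥ d = Δt * ((d + d') ⬝ᵥ f - 2⁻¹ * ((d + d') ⬝ᵥ K *ᵥ (d + d'))) := by
  subst hd' hf
  rw [hA.dotProduct_mulVec_self_sub, add_sub_cancel_left, smul_dotProduct,
    hA.dotProduct_mulVec_comm_s8, dotProduct_add, dotProduct_smul, smul_eq_mul, smul_eq_mul]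
  ring

lemma Matrix.IsSymm.midpoint_step_stiffness_energy_sub (hK : K.IsSymm) (hd' : d' = d + Δt • w)
    (hf : A *ᵥ w + (2⁻¹ : ℝ) • K *ᵥ (d + d') = f) :
    d' ⬝ᵥ K *ᵥ d' - d ⬝ᵥ K *ᵥ d = 2 * Δt * (w ⬝ᵥ f - w ⬝ᵥ A *ᵥ w) := by
  subst hd' hf
  rw [hK.dotProduct_mulVec_self_sub, add_sub_cancel_left, smul_dotProduct, dotProduct_add,
    dotProduct_smul, smul_eq_mul, smul_eq_mul]
  ring

end Energy

structure IsMidpointScheme {S m : ℕ} {nn : Fin S → ℕ}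
    (A K : ∀ i, Matrix (Fin (nn i)) (Fin (nn i)) ℝ) (C : ∀ i, Matrix (Fin m) (Fin (nn i)) ℝ)
    (Δt : ℝ) (d w : ∀ i, ℕ → Fin (nn i) → ℝ) (μ : ℕ → Fin m → ℝ) : Prop where
  rate_eq : ∀ i n, A i *ᵥ w i n + (2⁻¹ : ℝ) • K i *ᵥ (d i n + d i (n + 1)) = (C i)ᵀ *ᵥ μ n
  update : ∀ i n, d i (n + 1) = d i n + Δt • w i n
  constraint : ∀ n, ∑ i, C i *ᵥ d i n = 0

namespace IsMidpointScheme

variable {S m : ℕ} {nn : Fin S → ℕ} {A K : ∀ i, Matrix (Fin (nn i)) (Fin (nn i)) ℝ}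
  {C : ∀ i, Matrix (Fin m) (Fin (nn i)) ℝ} {Δt : ℝ} {d w : ∀ i, ℕ → Fin (nn i) → ℝ}
  {μ : ℕ → Fin m → ℝ}

lemma constraint_add (h : IsMidpointScheme A K C Δt d w μ) (n : ℕ) :
    ∑ i, C i *ᵥ (d i n + d i (n + 1)) = 0 := by
  simp only [mulVec_add, Finset.sum_add_distrib, h.constraint, add_zero]

lemma constraint_rate (h : IsMidpointScheme A K C Δt d w μ) (hΔt : Δt ≠ 0) (n : ℕ) :
    ∑ i, C i *ᵥ w i n = 0 := by
  have hw : ∀ i, C i *ᵥ w i n = Δt⁻¹ • (C i *ᵥ d i (n + 1) - C i *ᵥ d i n) := fun i => by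
    rw [h.update, mulVec_add, mulVec_smul, add_sub_cancel_left, smul_smul, inv_mul_cancel₀ hΔt,
      one_smul]
  simp only [hw, ← Finset.smul_sum, Finset.sum_sub_distrib, h.constraint, sub_self, smul_zero]

lemma energy_succ_le (h : IsMidpointScheme A K C Δt d w μ) (hΔt : 0 ≤ Δt)
    (hA : ∀ i, (A i).IsSymm) (hK : ∀ i, (K i).PosSemidef) (n : ℕ) :
    ∑ i, d i (n + 1) ⬝ᵥ A i *ᵥ d i (n + 1) ≤ ∑ i, d i n ⬝ᵥ A i *ᵥ d i n := by
  have hstep := Finset.sum_congr rfl fun i (_ : i ∈ Finset.univ) =>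
    (hA i).midpoint_step_energy_sub (h.update i n) (h.rate_eq i n)
  rw [Finset.sum_sub_distrib, ← Finset.mul_sum, Finset.sum_sub_distrib,
    sum_dotProduct_transpose_mulVec_eq_zero (h.constraint_add n), ← Finset.mul_sum] at hstep
  have hKs : 0 ≤ ∑ i, (d i n + d i (n + 1)) ⬝ᵥ K i *ᵥ (d i n + d i (n + 1)) :=
    Finset.sum_nonneg fun i _ => (hK i).dotProduct_mulVec_nonneg _
  have := mul_nonneg hΔt hKs
  linarith

lemma stiffness_energy_succ_add (h : IsMidpointScheme A K C Δt d w μ) (hΔt : Δt ≠ 0)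
    (hK : ∀ i, (K i).IsSymm) (n : ℕ) :
    ∑ i, d i (n + 1) ⬝ᵥ K i *ᵥ d i (n + 1) + 2 * Δt * ∑ i, w i n ⬝ᵥ A i *ᵥ w i n
      = ∑ i, d i n ⬝ᵥ K i *ᵥ d i n := by
  have hstep := Finset.sum_congr rfl fun i (_ : i ∈ Finset.univ) =>
    (hK i).midpoint_step_stiffness_energy_sub (h.update i n) (h.rate_eq i n)
  rw [Finset.sum_sub_distrib, ← Finset.mul_sum, Finset.sum_sub_distrib,
    sum_dotProduct_transpose_mulVec_eq_zero (h.constraint_rate hΔt n)] at hstep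
  linarith

lemma exists_bound_displacement (h : IsMidpointScheme A K C Δt d w μ) (hΔt : 0 ≤ Δt)
    (hA : ∀ i, (A i).PosDef) (hK : ∀ i, (K i).PosSemidef) :
    ∃ r, ∀ i n, euclidEnorm (d i n) ≤ r := by
  set V := fun n => ∑ i, d i n ⬝ᵥ A i *ᵥ d i n
  have hV : Antitone V := antitone_nat_of_succ_le fun n =>
    h.energy_succ_le hΔt (fun i => isHermitian_iff_isSymm.1 (hA i).isHermitian) hK n
  refine Finite.exists_forall_le_of_forall_exists_le fun i =>
    (hA i).exists_euclidEnorm_le (b := V 0) fun n => ?_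
  calc d i n ⬝ᵥ A i *ᵥ d i n ≤ V n :=
        Finset.single_le_sum (f := fun i => d i n ⬝ᵥ A i *ᵥ d i n)
          (fun j _ => (hA j).posSemidef.dotProduct_mulVec_nonneg _) (Finset.mem_univ i)
    _ ≤ V 0 := hV (Nat.zero_le n)

lemma exists_bound_rate (h : IsMidpointScheme A K C Δt d w μ) (hΔt : 0 < Δt)
    (hA : ∀ i, (A i).PosDef) (hK : ∀ i, (K i).PosSemidef) :
    ∃ r, ∀ i n, euclidEnorm (w i n) ≤ r := by
  set E := fun n => ∑ i, d i n ⬝ᵥ K i *ᵥ d i n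
  set W := fun n => ∑ i, w i n ⬝ᵥ A i *ᵥ w i n
  have hE_nonneg : ∀ n, 0 ≤ E n := fun n =>
    Finset.sum_nonneg fun i _ => (hK i).dotProduct_mulVec_nonneg _
  have hW_nonneg : ∀ n, 0 ≤ W n := fun n =>
    Finset.sum_nonneg fun i _ => (hA i).posSemidef.dotProduct_mulVec_nonneg _
  have hstep : ∀ n, E (n + 1) + 2 * Δt * W n = E n := fun n =>
    h.stiffness_energy_succ_add hΔt.ne' (fun i => isHermitian_iff_isSymm.1 (hK i).isHermitian) n
  have hE : Antitone E := antitone_nat_of_succ_le fun n => by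
    have := mul_nonneg (mul_nonneg zero_le_two hΔt.le) (hW_nonneg n)
    linarith [hstep n]
  refine Finite.exists_forall_le_of_forall_exists_le fun i =>
    (hA i).exists_euclidEnorm_le (b := E 0 / (2 * Δt)) fun n => ?_
  rw [le_div_iff₀ (by positivity)]
  calc w i n ⬝ᵥ A i *ᵥ w i n * (2 * Δt) ≤ W n * (2 * Δt) := by
        gcongr
        exact Finset.single_le_sum (f := fun i => w i n ⬝ᵥ A i *ᵥ w i n)
          (fun j _ => (hA j).posSemidef.dotProduct_mulVec_nonneg _) (Finset.mem_univ i)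
    _ ≤ E 0 := by linarith [hstep n, hE_nonneg (n + 1), hE (Nat.zero_le n)]

lemma exists_bound_multiplier (h : IsMidpointScheme A K C Δt d w μ)
    (hC : ∀ ν, (∀ i, (C i)ᵀ *ᵥ ν = 0) → ν = 0)
    (hd : ∃ r, ∀ i n, euclidEnorm (d i n) ≤ r) (hw : ∃ r, ∀ i n, euclidEnorm (w i n) ≤ r) :
    ∃ r, ∀ n, euclidEnorm (μ n) ≤ r := by
  obtain ⟨rd, hrd⟩ := hd
  obtain ⟨rw, hrw⟩ := hw
  refine exists_euclidEnorm_le_of_transpose_mulVec hC fun i =>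
    ⟨‖A i‖ * rw + ‖K i‖ * rd, fun n => ?_⟩
  rw [← h.rate_eq, ← mulVec_smul, smul_add]
  grw [euclidEnorm_add_le, euclidEnorm_mulVec_le, euclidEnorm_mulVec_le, hrw,
    euclidEnorm_add_smul_le (by norm_num) (by norm_num) (by norm_num) (hrd i n) (hrd i (n + 1))]

end IsMidpointScheme

lemma isMidpointScheme_of_modified_dContinuity {S m : ℕ} {nn : Fin S → ℕ}
    {M K : ∀ i, Matrix (Fin (nn i)) (Fin (nn i)) ℝ} {C : ∀ i, Matrix (Fin m) (Fin (nn i)) ℝ}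
    {Δt γ : ℝ} {d w : ∀ i, ℕ → Fin (nn i) → ℝ} {μ : ℕ → Fin m → ℝ}
    (heq : ∀ i n, M i *ᵥ w i n + K i *ᵥ ((1 - γ) • d i n + γ • d i (n + 1)) = (C i)ᵀ *ᵥ μ n)
    (hupd : ∀ i n, d i (n + 1) = d i n + Δt • w i n) (hcont : ∀ n, ∑ i, C i *ᵥ d i n = 0) :
    IsMidpointScheme (fun i => M i + ((γ - 1/2) * Δt) • K i) K C Δt d w μ where
  rate_eq i n := by
    rw [← heq, hupd]
    simp only [add_mulVec, smul_mulVec, mulVec_add, mulVec_smul]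
    module
  update := hupd
  constraint := hcont

theorem modified_dContinuity_stable_general
    (S m : ℕ) (nn : Fin S → ℕ)
    (M K : ∀ i : Fin S, Matrix (Fin (nn i)) (Fin (nn i)) ℝ)
    (hK : ∀ i, (K i).PosSemidef)
    (C : ∀ i : Fin S, Matrix (Fin m) (Fin (nn i)) ℝ)
    (Δt γ : ℝ) (hΔt : 0 < Δt) (hγ₀ : 0 < γ) (hγ₁ : γ ≤ 1)
    (hA : ∀ i, (M i + ((γ - 1/2) * Δt) • K i).PosDef)
    (d w : ∀ i : Fin S, ℕ → (Fin (nn i) → ℝ)) (μ : ℕ → (Fin m → ℝ))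
    (heq : ∀ i n, (M i).mulVec (w i n) +
      (K i).mulVec ((1 - γ) • d i n + γ • d i (n + 1)) = (C i)ᵀ.mulVec (μ n))
    (hupd : ∀ i n, d i (n + 1) = d i n + Δt • w i n)
    (hcont : ∀ n, ∑ i : Fin S, (C i).mulVec (d i n) = 0)
    (hind : ∀ ν : Fin m → ℝ, (∀ i, (C i)ᵀ.mulVec ν = 0) → ν = 0) :
    ∃ C₀ > (0 : ℝ),
      (∀ i : Fin S, ∀ n : ℕ, euclidEnorm (d i n) ≤ C₀ ∧ euclidEnorm (w i n) ≤ C₀) ∧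
      (∀ n : ℕ, euclidEnorm (μ n) ≤ C₀) ∧
      (∀ i : Fin S, ∀ n : ℕ, euclidEnorm (γ • w i n + (1 - γ) • w i (n + 1)) ≤ C₀) ∧
      (∀ n : ℕ, euclidEnorm (γ • μ n + (1 - γ) • μ (n + 1)) ≤ C₀) := by
  have h := isMidpointScheme_of_modified_dContinuity heq hupd hcont
  have hd := h.exists_bound_displacement hΔt.le hA hK
  have hw := h.exists_bound_rate hΔt hA hK
  obtain ⟨rμ, hrμ⟩ := h.exists_bound_multiplier hind hd hw
  obtain ⟨rd, hrd⟩ := hd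
  obtain ⟨rw, hrw⟩ := hw
  set C₀ := max (max rd rw) (max rμ 1)
  have hdC : ∀ i n, euclidEnorm (d i n) ≤ C₀ := fun i n =>
    (hrd i n).trans (le_max_of_le_left (le_max_left _ _))
  have hwC : ∀ i n, euclidEnorm (w i n) ≤ C₀ := fun i n =>
    (hrw i n).trans (le_max_of_le_left (le_max_right _ _))
  have hμC : ∀ n, euclidEnorm (μ n) ≤ C₀ := fun n =>
    (hrμ n).trans (le_max_of_le_right (le_max_left _ _))
  refine ⟨C₀, by positivity, fun i n => ⟨hdC i n, hwC i n⟩, hμC, fun i n => ?_, fun n => ?_⟩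
  · exact euclidEnorm_add_smul_le hγ₀.le (by linarith) (by ring) (hwC i n) (hwC i (n + 1))
  · exact euclidEnorm_add_smul_le hγ₀.le (by linarith) (by ring) (hμC n) (hμC (n + 1))

/-- Stability of the modified d-continuity method: with linearly independent constraints,
`0 < γ ≤ 1` and each `Aᵢ = Mᵢ + (γ - 1/2)·Δt·Kᵢ` positive definite, the temperatures
`dᵢ(n)`, the weighted-level rates `wᵢ(n)` and multipliers `μ(n)` are bounded, and
consequently the interpolated integer-level rates `γ·wᵢ(n) + (1-γ)·wᵢ(n+1)` and
multipliers `γ·μ(n) + (1-γ)·μ(n+1)` are also bounded. -/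
theorem modified_dContinuity_stable
    (S m : ℕ) (hS : 1 ≤ S) (nn : Fin S → ℕ)
    (M K : ∀ i : Fin S, Matrix (Fin (nn i)) (Fin (nn i)) ℝ)
    (hM : ∀ i, (M i).PosDef) (hK : ∀ i, (K i).PosSemidef)
    (C : ∀ i : Fin S, Matrix (Fin m) (Fin (nn i)) ℝ)
    (Δt γ : ℝ) (hΔt : 0 < Δt) (hγ₀ : 0 < γ) (hγ₁ : γ ≤ 1)
    (hA : ∀ i, (M i + ((γ - 1/2) * Δt) • K i).PosDef)
    (d w : ∀ i : Fin S, ℕ → (Fin (nn i) → ℝ)) (μ : ℕ → (Fin m → ℝ))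
    (heq : ∀ i n, (M i).mulVec (w i n) +
      (K i).mulVec ((1 - γ) • d i n + γ • d i (n + 1)) = (C i)ᵀ.mulVec (μ n))
    (hupd : ∀ i n, d i (n + 1) = d i n + Δt • w i n)
    (hcont : ∀ n, ∑ i : Fin S, (C i).mulVec (d i n) = 0)
    (hind : ∀ ν : Fin m → ℝ, (∀ i, (C i)ᵀ.mulVec ν = 0) → ν = 0) :
    ∃ C₀ > (0 : ℝ),
      (∀ i : Fin S, ∀ n : ℕ, euclidEnorm (d i n) ≤ C₀ ∧ euclidEnorm (w i n) ≤ C₀) ∧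
      (∀ n : ℕ, euclidEnorm (μ n) ≤ C₀) ∧
      (∀ i : Fin S, ∀ n : ℕ, euclidEnorm (γ • w i n + (1 - γ) • w i (n + 1)) ≤ C₀) ∧
      (∀ n : ℕ, euclidEnorm (γ • μ n + (1 - γ) • μ (n + 1)) ≤ C₀) :=
  modified_dContinuity_stable_general S m nn M K hK C Δt γ hΔt hγ₀ hγ₁ hA d w μ heq hupd hcont hind
end

section
/- Under the v-continuity domain decomposition method, the energy ∑_{i=1}^S v_i(n)ᵀ·A_i·v_i(n) is non-increasing in n: for all n ∈ ℕ, ∑_{i=1}^S v_i(n+1)ᵀ·A_i·v_i(n+1) ≤ ∑_{i=1}^S v_i(n)ᵀ·A_i·v_i(n). -/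
/-!
Write `A = M + (γ - 1/2) Δt K`. Differencing the subdomain equation at steps `n` and `n + 1` and
substituting the trapezoidal update gives, on each subdomain,
`A (v(n+1) - v(n)) = Cᵀ (λ(n+1) - λ(n)) - (Δt/2) K (v(n+1) + v(n))`.
Pairing with `v(n+1) + v(n)` and using the symmetry of `A`, the energy increment of a subdomain is
`(λ(n+1) - λ(n)) ⬝ C (v(n+1) + v(n))` minus a nonnegative `K`-dissipation term. Summed over the
subdomains, the coupling terms cancel by the v-continuity constraint at steps `n` and `n + 1`.
-/

open Matrix

variable {R ι κ : Type*} [Fintype ι] [Fintype κ]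

theorem Matrix.IsSymm.dotProduct_mulVec_sub_dotProduct_mulVec_s10 [CommRing R] {A : Matrix ι ι R}
    (hA : A.IsSymm) (a b : ι → R) :
    b ⬝ᵥ A *ᵥ b - a ⬝ᵥ A *ᵥ a = (b + a) ⬝ᵥ A *ᵥ (b - a) := by
  have hcross : b ⬝ᵥ A *ᵥ a = a ⬝ᵥ A *ᵥ b := by
    simpa only [hA.eq] using (dotProduct_transpose_mulVec A a b).symm
  simp only [mulVec_sub, dotProduct_sub, add_dotProduct]
  linear_combination hcross

theorem trapezoidal_mulVec_sub [Field R] [CharZero R] {M K : Matrix ι ι R} {C : Matrix κ ι R}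
    {Δt γ : R} {a b d d' : ι → R} {l l' : κ → R}
    (h : M *ᵥ a + K *ᵥ d = Cᵀ *ᵥ l) (h' : M *ᵥ b + K *ᵥ d' = Cᵀ *ᵥ l')
    (hd : d' = d + Δt • ((1 - γ) • a + γ • b)) :
    (M + ((γ - 1/2) * Δt) • K) *ᵥ (b - a) = Cᵀ *ᵥ (l' - l) - (Δt / 2) • K *ᵥ (b + a) := by
  subst hd
  simp only [mulVec_add, mulVec_smul, mulVec_sub, add_mulVec, smul_mulVec] at h' ⊢
  linear_combination (norm := module) h' - h

theorem trapezoidal_energy_sub_le {M K : Matrix ι ι ℝ} {C : Matrix κ ι ℝ}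
    {Δt γ : ℝ} {a b d d' : ι → ℝ} {l l' : κ → ℝ}
    (hM : M.IsSymm) (hK : K.PosSemidef) (hΔt : 0 ≤ Δt)
    (h : M *ᵥ a + K *ᵥ d = Cᵀ *ᵥ l) (h' : M *ᵥ b + K *ᵥ d' = Cᵀ *ᵥ l')
    (hd : d' = d + Δt • ((1 - γ) • a + γ • b)) :
    b ⬝ᵥ (M + ((γ - 1/2) * Δt) • K) *ᵥ b - a ⬝ᵥ (M + ((γ - 1/2) * Δt) • K) *ᵥ a ≤
      (l' - l) ⬝ᵥ C *ᵥ (b + a) := by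
  have hA : (M + ((γ - 1/2) * Δt) • K).IsSymm :=
    hM.add ((isHermitian_iff_isSymm.mp hK.isHermitian).smul _)
  have hdiss : 0 ≤ (b + a) ⬝ᵥ K *ᵥ (b + a) := hK.dotProduct_mulVec_nonneg _
  calc _ = (b + a) ⬝ᵥ (M + ((γ - 1/2) * Δt) • K) *ᵥ (b - a) :=
        hA.dotProduct_mulVec_sub_dotProduct_mulVec_s10 a b
    _ = (l' - l) ⬝ᵥ C *ᵥ (b + a) - Δt / 2 * ((b + a) ⬝ᵥ K *ᵥ (b + a)) := by
        rw [trapezoidal_mulVec_sub h h' hd, dotProduct_sub, dotProduct_smul,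
          dotProduct_transpose_mulVec, smul_eq_mul]
    _ ≤ _ := sub_le_self _ (mul_nonneg (div_nonneg hΔt zero_le_two) hdiss)

theorem vContinuity_energy_nonincreasing_general
    (S m : ℕ) (nn : Fin S → ℕ)
    (M K : ∀ i : Fin S, Matrix (Fin (nn i)) (Fin (nn i)) ℝ)
    (hM : ∀ i, (M i).PosDef) (hK : ∀ i, (K i).PosSemidef)
    (C : ∀ i : Fin S, Matrix (Fin m) (Fin (nn i)) ℝ)
    (Δt γ : ℝ) (hΔt : 0 < Δt)
    (d v : ∀ i : Fin S, ℕ → (Fin (nn i) → ℝ)) (lam : ℕ → (Fin m → ℝ))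
    (heq : ∀ i n, (M i).mulVec (v i n) + (K i).mulVec (d i n) = (C i)ᵀ.mulVec (lam n))
    (hupd : ∀ i n, d i (n + 1) = d i n + Δt • ((1 - γ) • v i n + γ • v i (n + 1)))
    (hcont : ∀ n, ∑ i : Fin S, (C i).mulVec (v i n) = 0) :
    ∀ n : ℕ,
      ∑ i : Fin S, v i (n + 1) ⬝ᵥ (M i + ((γ - 1/2) * Δt) • K i).mulVec (v i (n + 1)) ≤
        ∑ i : Fin S, v i n ⬝ᵥ (M i + ((γ - 1/2) * Δt) • K i).mulVec (v i n) := by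
  intro n
  have hstep i := trapezoidal_energy_sub_le (isHermitian_iff_isSymm.mp (hM i).isHermitian)
    (hK i) hΔt.le (heq i n) (heq i (n + 1)) (hupd i n)
  have hcoupling :
      ∑ i, (lam (n + 1) - lam n) ⬝ᵥ C i *ᵥ (v i (n + 1) + v i n) = 0 := by
    simp only [← dotProduct_sum, mulVec_add, Finset.sum_add_distrib, hcont, add_zero,
      dotProduct_zero]
  rw [← sub_nonpos, ← Finset.sum_sub_distrib]
  exact (Finset.sum_le_sum fun i _ => hstep i).trans hcoupling.le

/-- Under the v-continuity domain decomposition method (subdomain equation, trapezoidal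
update, and v-continuity constraint, with zero external forcing), the energy
`∑ᵢ vᵢ(n)ᵀ·Aᵢ·vᵢ(n)` with `Aᵢ = Mᵢ + (γ - 1/2)·Δt·Kᵢ` is non-increasing in `n`. -/
theorem vContinuity_energy_nonincreasing
    (S m : ℕ) (hS : 1 ≤ S) (nn : Fin S → ℕ)
    (M K : ∀ i : Fin S, Matrix (Fin (nn i)) (Fin (nn i)) ℝ)
    (hM : ∀ i, (M i).PosDef) (hK : ∀ i, (K i).PosSemidef)
    (C : ∀ i : Fin S, Matrix (Fin m) (Fin (nn i)) ℝ)
    (Δt γ : ℝ) (hΔt : 0 < Δt) (hγ₀ : 0 ≤ γ) (hγ₁ : γ ≤ 1)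
    (d v : ∀ i : Fin S, ℕ → (Fin (nn i) → ℝ)) (lam : ℕ → (Fin m → ℝ))
    (heq : ∀ i n, (M i).mulVec (v i n) + (K i).mulVec (d i n) = (C i)ᵀ.mulVec (lam n))
    (hupd : ∀ i n, d i (n + 1) = d i n + Δt • ((1 - γ) • v i n + γ • v i (n + 1)))
    (hcont : ∀ n, ∑ i : Fin S, (C i).mulVec (v i n) = 0) :
    ∀ n : ℕ,
      ∑ i : Fin S, v i (n + 1) ⬝ᵥ (M i + ((γ - 1/2) * Δt) • K i).mulVec (v i (n + 1)) ≤
        ∑ i : Fin S, v i n ⬝ᵥ (M i + ((γ - 1/2) * Δt) • K i).mulVec (v i n) :=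
  vContinuity_energy_nonincreasing_general S m nn M K hM hK C Δt γ hΔt d v lam heq hupd hcont
end

section
/- The jump in the Lagrange multipliers is determined by the jumps in the subdomain quantities: if for all i ∈ {1,…,S} and all n ∈ ℕ the subdomain equation M_i·v_i(n) + K_i·d_i(n) = C_iᵀ·λ(n) holds (zero external forcing), and the constraints are linearly independent, then for all n ∈ ℕ, λ(n+1) − λ(n) = G⁻¹·∑_{i=1}^S C_i·M̃_i⁻¹·(M_i·(v_i(n+1) − v_i(n)) + K_i·(d_i(n+1) − d_i(n))), where M̃_i := M_i + γ·Δt·K_i and G := ∑_{i=1}^S C_i·M̃_i⁻¹·C_iᵀ. Consequently, if the sequences (v_i(n)) and (d_i(n+1) − d_i(n)) are bounded, then (λ(n+1) − λ(n)) is bounded. -/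
open Matrix

/-!
Subtracting the subdomain equations at steps `n` and `n + 1` gives
`Mᵢ Δvᵢ + Kᵢ Δdᵢ = Cᵢᵀ Δλ`. Applying `Cᵢ M̃ᵢ⁻¹` and summing over `i` turns the right-hand sides
into `G Δλ`, and `G` is positive definite, hence invertible: each `M̃ᵢ⁻¹` is positive definite
and the `Cᵢᵀ` have no common kernel. Solving for `Δλ` gives the formula, which exhibits `Δλ` as
a fixed linear image of `vᵢ(n + 1)`, `vᵢ(n)` and `Δdᵢ`, so it is bounded whenever these are.
-/

namespace Matrix

variable {ι R m : Type*} [Fintype ι] [Fintype m] {n : ι → Type*} [∀ i, Fintype (n i)]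

theorem posDef_sum_mul_mul_conjTranspose [Ring R] [PartialOrder R] [StarRing R]
    [IsOrderedAddMonoid R] {P : ∀ i, Matrix (n i) (n i) R} {C : ∀ i, Matrix m (n i) R}
    (hP : ∀ i, (P i).PosDef) (hC : ∀ x : m → R, (∀ i, (C i)ᴴ *ᵥ x = 0) → x = 0) :
    (∑ i, C i * P i * (C i)ᴴ).PosDef := by
  refine .of_dotProduct_mulVec_pos (isSelfAdjoint_sum _ fun i _ ↦
    isHermitian_mul_mul_conjTranspose _ (hP i).isHermitian) fun x hx ↦ ?_
  have hquad : ∀ i, star x ⬝ᵥ (C i * P i * (C i)ᴴ) *ᵥ x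
      = star ((C i)ᴴ *ᵥ x) ⬝ᵥ P i *ᵥ ((C i)ᴴ *ᵥ x) := fun i ↦ by
    simp only [star_mulVec, conjTranspose_conjTranspose, mulVec_mulVec, dotProduct_mulVec,
      vecMul_vecMul, Matrix.mul_assoc]
  obtain ⟨i₀, hi₀⟩ : ∃ i, (C i)ᴴ *ᵥ x ≠ 0 := by
    by_contra! h
    exact hx (hC x h)
  rw [sum_mulVec, dotProduct_sum]
  refine Finset.sum_pos' (fun i _ ↦ ?_) ⟨i₀, Finset.mem_univ _, ?_⟩ <;> rw [hquad]
  · exact (hP i).posSemidef.dotProduct_mulVec_nonneg _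
  · exact (hP i₀).dotProduct_mulVec_pos hi₀

theorem eq_nonsing_inv_mulVec_sum_of_transpose_mulVec_eq [CommRing R] [DecidableEq m]
    {N : ∀ i, Matrix (n i) (n i) R} {C : ∀ i, Matrix m (n i) R} {μ : m → R} {r : ∀ i, n i → R}
    (hr : ∀ i, r i = (C i)ᵀ *ᵥ μ) (hG : IsUnit (∑ i, C i * N i * (C i)ᵀ).det) :
    μ = (∑ i, C i * N i * (C i)ᵀ)⁻¹ *ᵥ ∑ i, (C i * N i) *ᵥ r i := by
  have hsum : ∑ i, (C i * N i) *ᵥ r i = (∑ i, C i * N i * (C i)ᵀ) *ᵥ μ := by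
    simp only [hr, mulVec_mulVec, sum_mulVec]
  rw [hsum, mulVec_mulVec, nonsing_inv_mul _ hG, one_mulVec]

end Matrix

open scoped Matrix.Norms.L2Operator

lemma enorm_eq_norm {k : ℕ} (x : Fin k → ℝ) :
    _root_.enorm x = ‖(EuclideanSpace.equiv (Fin k) ℝ).symm x‖ := by
  rw [_root_.enorm, EuclideanSpace.norm_eq]
  simp [dotProduct, ← sq]

lemma enorm_mulVec_le {p q : ℕ} (A : Matrix (Fin p) (Fin q) ℝ) (x : Fin q → ℝ) :
    _root_.enorm (A *ᵥ x) ≤ ‖A‖ * _root_.enorm x := by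
  rw [enorm_eq_norm, enorm_eq_norm]
  exact A.l2_opNorm_mulVec _

def EnormBounded {α : Type*} {k : ℕ} (x : α → Fin k → ℝ) : Prop :=
  ∃ c > 0, ∀ a, _root_.enorm (x a) ≤ c

namespace EnormBounded

variable {α : Type*} {k : ℕ} {x y : α → Fin k → ℝ}

lemma add (hx : EnormBounded x) (hy : EnormBounded y) : EnormBounded fun a ↦ x a + y a := by
  obtain ⟨c, hc, hxc⟩ := hx
  obtain ⟨c', hc', hyc'⟩ := hy
  refine ⟨c + c', by positivity, fun a ↦ ?_⟩
  simp only [enorm_eq_norm, map_add] at hxc hyc' ⊢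
  exact (norm_add_le _ _).trans (add_le_add (hxc a) (hyc' a))

lemma sub (hx : EnormBounded x) (hy : EnormBounded y) : EnormBounded fun a ↦ x a - y a := by
  obtain ⟨c, hc, hxc⟩ := hx
  obtain ⟨c', hc', hyc'⟩ := hy
  refine ⟨c + c', by positivity, fun a ↦ ?_⟩
  simp only [enorm_eq_norm, map_sub] at hxc hyc' ⊢
  exact (norm_sub_le _ _).trans (add_le_add (hxc a) (hyc' a))

lemma zero : EnormBounded fun _ : α ↦ (0 : Fin k → ℝ) :=
  ⟨1, one_pos, fun _ ↦ by simp [_root_.enorm]⟩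

lemma sum {ι : Type*} {s : Finset ι} {x : ι → α → Fin k → ℝ}
    (hx : ∀ i ∈ s, EnormBounded (x i)) : EnormBounded fun a ↦ ∑ i ∈ s, x i a := by
  classical
  induction s using Finset.induction_on with
  | empty => simpa only [Finset.sum_empty] using zero
  | insert i s hi ih =>
    simp only [Finset.sum_insert hi]
    exact (hx i (s.mem_insert_self i)).add (ih fun j hj ↦ hx j (Finset.mem_insert_of_mem hj))

lemma mulVec {p : ℕ} (A : Matrix (Fin p) (Fin k) ℝ) (hx : EnormBounded x) :
    EnormBounded fun a ↦ A *ᵥ x a := by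
  obtain ⟨c, hc, hxc⟩ := hx
  refine ⟨(‖A‖ + 1) * c, by positivity, fun a ↦ ?_⟩
  calc _root_.enorm (A *ᵥ x a) ≤ ‖A‖ * c := (enorm_mulVec_le _ _).trans (by gcongr; exact hxc a)
    _ ≤ (‖A‖ + 1) * c := by gcongr; linarith

lemma comp (hx : EnormBounded x) {β : Type*} (f : β → α) : EnormBounded fun b ↦ x (f b) := by
  obtain ⟨c, hc, hxc⟩ := hx
  exact ⟨c, hc, fun b ↦ hxc (f b)⟩

end EnormBounded

theorem lagrange_multiplier_jump_formula_general
    (S m : ℕ) (nn : Fin S → ℕ)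
    (M K : ∀ i : Fin S, Matrix (Fin (nn i)) (Fin (nn i)) ℝ)
    (hM : ∀ i, (M i).PosDef) (hK : ∀ i, (K i).PosSemidef)
    (C : ∀ i : Fin S, Matrix (Fin m) (Fin (nn i)) ℝ)
    (Δt γ : ℝ) (hΔt : 0 < Δt) (hγ₀ : 0 ≤ γ)
    (d v : ∀ i : Fin S, ℕ → (Fin (nn i) → ℝ)) (lam : ℕ → (Fin m → ℝ))
    (heq : ∀ i n, (M i).mulVec (v i n) + (K i).mulVec (d i n) = (C i)ᵀ.mulVec (lam n))
    (hind : ∀ μ : Fin m → ℝ, (∀ i, (C i)ᵀ.mulVec μ = 0) → μ = 0) :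
    (∀ n : ℕ,
      lam (n + 1) - lam n =
        (∑ i : Fin S, C i * (M i + (γ * Δt) • K i)⁻¹ * (C i)ᵀ)⁻¹.mulVec
          (∑ i : Fin S,
            (C i * (M i + (γ * Δt) • K i)⁻¹).mulVec
              ((M i).mulVec (v i (n + 1) - v i n) +
                (K i).mulVec (d i (n + 1) - d i n)))) ∧
    ((∃ C₁ > (0 : ℝ), ∀ i : Fin S, ∀ n : ℕ, _root_.enorm (v i n) ≤ C₁) →
      (∃ C₂ > (0 : ℝ), ∀ i : Fin S, ∀ n : ℕ, _root_.enorm (d i (n + 1) - d i n) ≤ C₂) →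
      ∃ C₃ > (0 : ℝ), ∀ n : ℕ, _root_.enorm (lam (n + 1) - lam n) ≤ C₃) := by
  have hMt : ∀ i, (M i + (γ * Δt) • K i).PosDef := fun i ↦
    (hM i).add_posSemidef ((hK i).smul (mul_nonneg hγ₀ hΔt.le))
  have hG : (∑ i, C i * (M i + (γ * Δt) • K i)⁻¹ * (C i)ᵀ).PosDef := by
    simpa only [conjTranspose_eq_transpose_of_trivial] using
      posDef_sum_mul_mul_conjTranspose (fun i ↦ (hMt i).inv)
        (by simpa only [conjTranspose_eq_transpose_of_trivial] using hind)
  have hdiff : ∀ i n, M i *ᵥ (v i (n + 1) - v i n) + K i *ᵥ (d i (n + 1) - d i n)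
      = (C i)ᵀ *ᵥ (lam (n + 1) - lam n) := fun i n ↦ by
    rw [mulVec_sub, mulVec_sub, mulVec_sub, ← heq, ← heq]
    abel
  have hjump : ∀ n, lam (n + 1) - lam n = _ := fun n ↦
    eq_nonsing_inv_mulVec_sum_of_transpose_mulVec_eq (fun i ↦ hdiff i n)
      ((isUnit_iff_isUnit_det _).mp hG.isUnit)
  refine ⟨hjump, fun ⟨c₁, hc₁, hvc⟩ ⟨c₂, hc₂, hdc⟩ ↦ ?_⟩
  have hv : ∀ i, EnormBounded (v i) := fun i ↦ ⟨c₁, hc₁, hvc i⟩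
  have hd : ∀ i, EnormBounded fun n ↦ d i (n + 1) - d i n := fun i ↦ ⟨c₂, hc₂, hdc i⟩
  suffices EnormBounded fun n ↦ lam (n + 1) - lam n from this
  simp_rw [hjump]
  exact .mulVec _ <| .sum fun i _ ↦ .mulVec _ <|
    .add (.mulVec _ (.sub ((hv i).comp (· + 1)) (hv i))) (.mulVec _ (hd i))

/-- The jump in the Lagrange multipliers is determined by the jumps in the subdomain
quantities:
`λ(n+1) - λ(n) = G⁻¹·∑ᵢ Cᵢ·M̃ᵢ⁻¹·(Mᵢ·(vᵢ(n+1) - vᵢ(n)) + Kᵢ·(dᵢ(n+1) - dᵢ(n)))`,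
where `M̃ᵢ = Mᵢ + γ·Δt·Kᵢ` and `G = ∑ᵢ Cᵢ·M̃ᵢ⁻¹·Cᵢᵀ`. Consequently, if the rates and
the temperature jumps are bounded, then the multiplier jumps are bounded. -/
theorem lagrange_multiplier_jump_formula
    (S m : ℕ) (hS : 1 ≤ S) (nn : Fin S → ℕ)
    (M K : ∀ i : Fin S, Matrix (Fin (nn i)) (Fin (nn i)) ℝ)
    (hM : ∀ i, (M i).PosDef) (hK : ∀ i, (K i).PosSemidef)
    (C : ∀ i : Fin S, Matrix (Fin m) (Fin (nn i)) ℝ)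
    (Δt γ : ℝ) (hΔt : 0 < Δt) (hγ₀ : 0 ≤ γ) (hγ₁ : γ ≤ 1)
    (d v : ∀ i : Fin S, ℕ → (Fin (nn i) → ℝ)) (lam : ℕ → (Fin m → ℝ))
    (heq : ∀ i n, (M i).mulVec (v i n) + (K i).mulVec (d i n) = (C i)ᵀ.mulVec (lam n))
    (hind : ∀ μ : Fin m → ℝ, (∀ i, (C i)ᵀ.mulVec μ = 0) → μ = 0) :
    (∀ n : ℕ,
      lam (n + 1) - lam n =
        (∑ i : Fin S, C i * (M i + (γ * Δt) • K i)⁻¹ * (C i)ᵀ)⁻¹.mulVec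
          (∑ i : Fin S,
            (C i * (M i + (γ * Δt) • K i)⁻¹).mulVec
              ((M i).mulVec (v i (n + 1) - v i n) +
                (K i).mulVec (d i (n + 1) - d i n)))) ∧
    ((∃ C₁ > (0 : ℝ), ∀ i : Fin S, ∀ n : ℕ, _root_.enorm (v i n) ≤ C₁) →
      (∃ C₂ > (0 : ℝ), ∀ i : Fin S, ∀ n : ℕ, _root_.enorm (d i (n + 1) - d i n) ≤ C₂) →
      ∃ C₃ > (0 : ℝ), ∀ n : ℕ, _root_.enorm (lam (n + 1) - lam n) ≤ C₃) :=
  lagrange_multiplier_jump_formula_general S m nn M K hM hK C Δt γ hΔt hγ₀ d v lam heq hind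
end

section
/- Let M be a real symmetric positive definite n × n matrix, K a real symmetric positive semidefinite n × n matrix, and ω ≥ 0 a real number such that xᵀ·K·x ≤ ω·xᵀ·M·x for all x ∈ ℝⁿ. Let Δt > 0, γ ∈ [0,1], α > 0, and set α* := 1 + α·(γ − 1/2). If α* ≥ 0 and Δt·(1 − 2γ)·ω ≤ 2·α*, then the matrix Ã := α*·M + Δt·(γ − 1/2)·K is positive semidefinite. In particular, for 1/2 ≤ γ ≤ 1 the matrix Ã is positive semidefinite for every Δt > 0 and every α > 0. -/
/-! The bound `xᵀKx ≤ ω·xᵀMx` says that `ω • M - K` is positive semidefinite. Write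
`Ã = a • M + b • K` with `a := α*` and `b := Δt·(γ - 1/2)`. When `b ≥ 0`, `Ã` is a
nonnegative combination of `M` and `K`; otherwise `Ã = (a + bω) • M + (-b) • (ω • M - K)`,
and the stability condition is exactly `a + bω ≥ 0`. -/

open Matrix

variable {n : Type*}

theorem Matrix.PosSemidef.smul_sub_of_dotProduct_mulVec_le [Fintype n] {M K : Matrix n n ℝ}
    (hM : M.IsHermitian) (hK : K.IsHermitian) {ω : ℝ}
    (hKM : ∀ x : n → ℝ, x ⬝ᵥ K *ᵥ x ≤ ω * (x ⬝ᵥ M *ᵥ x)) : (ω • M - K).PosSemidef := by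
  refine .of_dotProduct_mulVec_nonneg ((hM.smul (.all ω)).sub hK) fun x => ?_
  simpa [sub_mulVec, smul_mulVec, dotProduct_sub] using hKM x

theorem Matrix.PosSemidef.smul_add_smul_of_posSemidef_smul_sub {M K : Matrix n n ℝ}
    (hM : M.PosSemidef) (hK : K.PosSemidef) {ω : ℝ} (hKM : (ω • M - K).PosSemidef)
    {a b : ℝ} (ha : 0 ≤ a) (hab : 0 ≤ a + b * ω) : (a • M + b • K).PosSemidef := by
  rcases le_total 0 b with hb | hb
  · exact (hM.smul ha).add (hK.smul hb)
  · have hsplit : a • M + b • K = (a + b * ω) • M + (-b) • (ω • M - K) := by module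
    rw [hsplit]
    exact (hM.smul hab).add (hKM.smul (neg_nonneg.2 hb))

theorem Atilde_posSemidef_general {n : ℕ} (M K : Matrix (Fin n) (Fin n) ℝ)
    (hM : M.PosDef) (hK : K.PosSemidef)
    (ω : ℝ)
    (hgen : ∀ x : Fin n → ℝ, x ⬝ᵥ K.mulVec x ≤ ω * (x ⬝ᵥ M.mulVec x))
    (Δt γ α : ℝ)
    (hαstar : 0 ≤ 1 + α * (γ - 1/2))
    (hcond : Δt * (1 - 2 * γ) * ω ≤ 2 * (1 + α * (γ - 1/2))) :
    ((1 + α * (γ - 1/2)) • M + (Δt * (γ - 1/2)) • K).PosSemidef ∧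
      (1/2 ≤ γ → ∀ Δt' α' : ℝ, 0 < Δt' → 0 < α' →
        ((1 + α' * (γ - 1/2)) • M + (Δt' * (γ - 1/2)) • K).PosSemidef) := by
  refine ⟨?_, fun hγ Δt' α' hΔt' hα' => ?_⟩
  · have hKM := PosSemidef.smul_sub_of_dotProduct_mulVec_le hM.isHermitian hK.isHermitian hgen
    exact hM.posSemidef.smul_add_smul_of_posSemidef_smul_sub hK hKM hαstar (by linarith)
  · have hγ' : 0 ≤ γ - 1/2 := sub_nonneg.2 hγ
    exact (hM.posSemidef.smul (by positivity)).add (hK.smul (by positivity))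

/-- If `M` is symmetric positive definite, `K` symmetric positive semidefinite, `ω ≥ 0`
satisfies `xᵀKx ≤ ω·xᵀMx` for all `x`, `Δt > 0`, `γ ∈ [0,1]`, `α > 0`, and with
`α* = 1 + α·(γ - 1/2)` we have `α* ≥ 0` and `Δt·(1-2γ)·ω ≤ 2·α*`, then
`Ã = α*·M + Δt·(γ - 1/2)·K` is positive semidefinite.  In particular, for
`1/2 ≤ γ ≤ 1` it is positive semidefinite for every `Δt > 0` and every `α > 0`. -/
theorem Atilde_posSemidef {n : ℕ} (M K : Matrix (Fin n) (Fin n) ℝ)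
    (hM : M.PosDef) (hK : K.PosSemidef)
    (ω : ℝ) (hω : 0 ≤ ω)
    (hgen : ∀ x : Fin n → ℝ, x ⬝ᵥ K.mulVec x ≤ ω * (x ⬝ᵥ M.mulVec x))
    (Δt γ α : ℝ) (hΔt : 0 < Δt) (hγ₀ : 0 ≤ γ) (hγ₁ : γ ≤ 1) (hα : 0 < α)
    (hαstar : 0 ≤ 1 + α * (γ - 1/2))
    (hcond : Δt * (1 - 2 * γ) * ω ≤ 2 * (1 + α * (γ - 1/2))) :
    ((1 + α * (γ - 1/2)) • M + (Δt * (γ - 1/2)) • K).PosSemidef ∧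
      (1/2 ≤ γ → ∀ Δt' α' : ℝ, 0 < Δt' → 0 < α' →
        ((1 + α' * (γ - 1/2)) • M + (Δt' * (γ - 1/2)) • K).PosSemidef) :=
  Atilde_posSemidef_general M K hM hK ω hgen Δt γ α hαstar hcond
end

section
/- Stability and bounded drift of the Baumgarte stabilized method: under the Baumgarte stabilized domain decomposition method with parameter α > 0, if for each i the matrix Ã_i := α*·M_i + Δt·(γ − 1/2)·K_i is positive semidefinite, where α* := 1 + α·(γ − 1/2), then there exists a constant C > 0 such that for all i ∈ {1,…,S} and all n ∈ ℕ, ‖v_i(n)‖ ≤ C, and moreover the drift in the original constraint is bounded: ‖∑_{i=1}^S C_i·d_i(n)‖ = (Δt/α)·‖∑_{i=1}^S C_i·v_i(n)‖ ≤ C for all n ∈ ℕ. -/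
open Matrix

/-!
Gluing the subdomains turns the scheme into a single block system `M v + K d = Cᵀ λ`,
`C v + (α/Δt) C d = 0` with `M, K` block diagonal and `C = [C₁ ⋯ C_S]`. Pairing the equation
with `v + (α/Δt) d`, which lies in the kernel of `C`, eliminates the multiplier. For the
`γ`-averaged step `ū, d̄` this shows that the energy `dᵀK d + (α/Δt) dᵀM d` changes by
`-2Δt ūᵀÃū - 2α d̄ᵀK d̄ ≤ 0`, so `d` stays bounded. At a single time it gives
`μ² ‖v‖² ≤ ‖(K + (α/Δt) M) d‖²` with `μ > 0` a lower spectral bound of `M`, so `v` stays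
bounded as well. The drift identity is the constraint itself.
-/

open scoped MatrixOrder

namespace Matrix

section QuadraticForm

variable {ι κ : Type*} [Fintype ι] [Fintype κ]

lemma dotProduct_mulVec_comm_of_isHermitian {A : Matrix ι ι ℝ} (hA : A.IsHermitian)
    (x y : ι → ℝ) : x ⬝ᵥ A *ᵥ y = y ⬝ᵥ A *ᵥ x := by
  rw [dotProduct_mulVec, ← mulVec_transpose, ← conjTranspose_eq_transpose_of_trivial, hA.eq,
    dotProduct_comm]

lemma dotProduct_transpose_mulVec_eq_zero {R : Type*} [CommSemiring R] {C : Matrix κ ι R}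
    {x : ι → R} (hx : C *ᵥ x = 0) (l : κ → R) : x ⬝ᵥ Cᵀ *ᵥ l = 0 := by
  rw [mulVec_transpose, dotProduct_comm, ← dotProduct_mulVec, hx, dotProduct_zero]

lemma dotProduct_sq_le (x y : ι → ℝ) : (x ⬝ᵥ y) ^ 2 ≤ (x ⬝ᵥ x) * (y ⬝ᵥ y) := by
  simpa only [dotProduct, sq] using Finset.sum_mul_sq_le_sq_mul_sq Finset.univ x y

lemma dotProduct_mulVec_le_of_le {A B : Matrix ι ι ℝ} (h : A ≤ B) (x : ι → ℝ) :
    x ⬝ᵥ A *ᵥ x ≤ x ⬝ᵥ B *ᵥ x := by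
  have := (Matrix.le_iff.mp h).dotProduct_mulVec_nonneg x
  simp only [star_trivial, sub_mulVec, dotProduct_sub] at this
  linarith

variable [DecidableEq ι]

lemma dotProduct_algebraMap_mulVec (r : ℝ) (x : ι → ℝ) :
    x ⬝ᵥ algebraMap ℝ (Matrix ι ι ℝ) r *ᵥ x = r * (x ⬝ᵥ x) := by
  rw [Algebra.algebraMap_eq_smul_one, smul_mulVec, one_mulVec, dotProduct_smul, smul_eq_mul]

lemma PosDef.exists_pos_mul_dotProduct_self_le {M : Matrix ι ι ℝ} (hM : M.PosDef) :
    ∃ μ > 0, ∀ x : ι → ℝ, μ * (x ⬝ᵥ x) ≤ x ⬝ᵥ M *ᵥ x := by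
  cases isEmpty_or_nonempty ι
  · exact ⟨1, one_pos, fun x => by simp [Subsingleton.elim x 0]⟩
  obtain ⟨μ, hμ, hle⟩ := (CFC.exists_pos_algebraMap_le_iff hM.isHermitian.isSelfAdjoint).mpr
    fun r hr => hM.isStrictlyPositive.spectrum_pos hr
  refine ⟨μ, hμ, fun x => ?_⟩
  simpa only [dotProduct_algebraMap_mulVec] using dotProduct_mulVec_le_of_le hle x

lemma IsHermitian.exists_dotProduct_mulVec_le {A : Matrix ι ι ℝ} (hA : A.IsHermitian) :
    ∃ c ≥ 0, ∀ x : ι → ℝ, x ⬝ᵥ A *ᵥ x ≤ c * (x ⬝ᵥ x) := by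
  obtain ⟨c, hc⟩ := (A.finite_real_spectrum.insert 0).bddAbove
  have hle : A ≤ algebraMap ℝ _ c :=
    le_algebraMap_of_spectrum_le (fun r hr => hc (Set.mem_insert_of_mem 0 hr)) hA.isSelfAdjoint
  refine ⟨c, hc (Set.mem_insert 0 _), fun x => ?_⟩
  simpa only [dotProduct_algebraMap_mulVec] using dotProduct_mulVec_le_of_le hle x

omit [DecidableEq ι] in
lemma exists_mulVec_dotProduct_self_le (A : Matrix κ ι ℝ) :
    ∃ c ≥ 0, ∀ x : ι → ℝ, A *ᵥ x ⬝ᵥ A *ᵥ x ≤ c * (x ⬝ᵥ x) := by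
  classical
  obtain ⟨c, hc, hle⟩ := (isHermitian_conjTranspose_mul_self A).exists_dotProduct_mulVec_le
  refine ⟨c, hc, fun x => ?_⟩
  have := hle x
  rwa [conjTranspose_eq_transpose_of_trivial, ← mulVec_mulVec, mulVec_transpose, dotProduct_comm,
    ← dotProduct_mulVec] at this

end QuadraticForm

section Block

variable {ι κ R : Type*} {p : ι → Type*}

def sigmaCols (C : ∀ i, Matrix κ (p i) R) : Matrix κ (Σ i, p i) R :=
  of fun r q => C q.1 r q.2

lemma transpose_sigmaCols_mulVec [NonUnitalNonAssocSemiring R] [Fintype κ]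
    (C : ∀ i, Matrix κ (p i) R) (l : κ → R) :
    (sigmaCols C)ᵀ *ᵥ l = Sigma.uncurry fun i => (C i)ᵀ *ᵥ l :=
  rfl

variable [Fintype ι] [∀ i, Fintype (p i)]

lemma sigmaCols_mulVec_uncurry [NonUnitalNonAssocSemiring R] (C : ∀ i, Matrix κ (p i) R)
    (x : ∀ i, p i → R) : sigmaCols C *ᵥ Sigma.uncurry x = ∑ i, C i *ᵥ x i := by
  ext r
  simp only [mulVec, dotProduct, Fintype.sum_sigma, Finset.sum_apply]
  rfl

lemma uncurry_dotProduct_uncurry [NonUnitalNonAssocSemiring R] (x y : ∀ i, p i → R) :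
    Sigma.uncurry x ⬝ᵥ Sigma.uncurry y = ∑ i, x i ⬝ᵥ y i :=
  Fintype.sum_sigma _

lemma dotProduct_self_le_uncurry (x : ∀ i, p i → ℝ) (i : ι) :
    x i ⬝ᵥ x i ≤ Sigma.uncurry x ⬝ᵥ Sigma.uncurry x := by
  rw [uncurry_dotProduct_uncurry]
  exact Finset.single_le_sum (fun j _ => dotProduct_self_star_nonneg (x j)) (Finset.mem_univ i)

variable [DecidableEq ι]

lemma blockDiagonal'_mulVec_uncurry [NonUnitalNonAssocSemiring R]
    (A : ∀ i, Matrix (p i) (p i) R) (x : ∀ i, p i → R) :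
    blockDiagonal' A *ᵥ Sigma.uncurry x = Sigma.uncurry fun i => A i *ᵥ x i := by
  ext ⟨i, j⟩
  simp only [mulVec, dotProduct, Fintype.sum_sigma, Sigma.uncurry]
  rw [Finset.sum_eq_single i (fun k _ hk => by simp [blockDiagonal'_apply_ne _ _ _ hk.symm])
    (by simp)]
  simp

lemma uncurry_dotProduct_blockDiagonal'_mulVec (A : ∀ i, Matrix (p i) (p i) ℝ)
    (x : ∀ i, p i → ℝ) :
    Sigma.uncurry x ⬝ᵥ blockDiagonal' A *ᵥ Sigma.uncurry x = ∑ i, x i ⬝ᵥ A i *ᵥ x i := by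
  rw [blockDiagonal'_mulVec_uncurry, uncurry_dotProduct_uncurry]

lemma PosSemidef.blockDiagonal' {A : ∀ i, Matrix (p i) (p i) ℝ} (hA : ∀ i, (A i).PosSemidef) :
    (blockDiagonal' A).PosSemidef := by
  refine .of_dotProduct_mulVec_nonneg (isHermitian_blockDiagonal'_iff.2 fun i => (hA i).1)
    fun x => ?_
  obtain ⟨y, rfl⟩ : ∃ y : ∀ i, p i → ℝ, Sigma.uncurry y = x := ⟨fun i j => x ⟨i, j⟩, rfl⟩
  rw [star_trivial, uncurry_dotProduct_blockDiagonal'_mulVec]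
  exact Finset.sum_nonneg fun i _ => by simpa using (hA i).dotProduct_mulVec_nonneg _

lemma PosDef.blockDiagonal' {A : ∀ i, Matrix (p i) (p i) ℝ} (hA : ∀ i, (A i).PosDef) :
    (blockDiagonal' A).PosDef := by
  refine .of_dotProduct_mulVec_pos (isHermitian_blockDiagonal'_iff.2 fun i => (hA i).1)
    fun x hx => ?_
  obtain ⟨y, rfl⟩ : ∃ y : ∀ i, p i → ℝ, Sigma.uncurry y = x := ⟨fun i j => x ⟨i, j⟩, rfl⟩
  obtain ⟨i, hi⟩ : ∃ i, y i ≠ 0 := by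
    by_contra! h
    exact hx (funext fun q => congrFun (h q.1) q.2)
  rw [star_trivial, uncurry_dotProduct_blockDiagonal'_mulVec]
  exact Finset.sum_pos' (fun j _ => by simpa using (hA j).posSemidef.dotProduct_mulVec_nonneg _)
    ⟨i, Finset.mem_univ i, by simpa using (hA i).dotProduct_mulVec_pos hi⟩

end Block

end Matrix

section Baumgarte

variable {ι κ : Type*} [Fintype ι] [Fintype κ]

structure IsBaumgarteTrajectory (M K : Matrix ι ι ℝ) (C : Matrix κ ι ℝ) (Δt γ α : ℝ)
    (d v : ℕ → ι → ℝ) (lam : ℕ → κ → ℝ) : Prop where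
  equation : ∀ n, M *ᵥ v n + K *ᵥ d n = Cᵀ *ᵥ lam n
  update : ∀ n, d (n + 1) = d n + Δt • ((1 - γ) • v n + γ • v (n + 1))
  constraint : ∀ n, C *ᵥ v n + (α / Δt) • C *ᵥ d n = 0

def baumgarteEnergy (M K : Matrix ι ι ℝ) (β : ℝ) (x : ι → ℝ) : ℝ :=
  x ⬝ᵥ K *ᵥ x + β * (x ⬝ᵥ M *ᵥ x)

-- `d + Δt • u` is the next displacement, `d + (γ * Δt) • u` the `γ`-average of the two.
lemma baumgarteEnergy_add_smul_sub {M K : Matrix ι ι ℝ} (hM : M.IsHermitian)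
    (hK : K.IsHermitian) {Δt γ α β : ℝ} (hβ : β * Δt = α) (d u : ι → ℝ) :
    baumgarteEnergy M K β (d + Δt • u) - baumgarteEnergy M K β d =
      2 * Δt * ((u + β • (d + (γ * Δt) • u)) ⬝ᵥ (M *ᵥ u + K *ᵥ (d + (γ * Δt) • u)))
      - 2 * Δt * (u ⬝ᵥ ((1 + α * (γ - 1/2)) • M + (Δt * (γ - 1/2)) • K) *ᵥ u)
      - 2 * α * ((d + (γ * Δt) • u) ⬝ᵥ K *ᵥ (d + (γ * Δt) • u)) := by
  subst hβ
  have hMs := dotProduct_mulVec_comm_of_isHermitian hM u d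
  have hKs := dotProduct_mulVec_comm_of_isHermitian hK u d
  simp only [baumgarteEnergy, mulVec_add, mulVec_smul, add_mulVec, smul_mulVec, dotProduct_add,
    add_dotProduct, dotProduct_smul, smul_dotProduct, smul_eq_mul, hMs, hKs]
  ring

lemma add_smul_dotProduct_mulVec_add_mulVec_eq_zero {M K : Matrix ι ι ℝ} {C : Matrix κ ι ℝ}
    {β : ℝ} {x y : ι → ℝ} {l : κ → ℝ} (heq : M *ᵥ x + K *ᵥ y = Cᵀ *ᵥ l)
    (hc : C *ᵥ x + β • C *ᵥ y = 0) : (x + β • y) ⬝ᵥ (M *ᵥ x + K *ᵥ y) = 0 := by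
  rw [heq]
  exact dotProduct_transpose_mulVec_eq_zero (by rwa [mulVec_add, mulVec_smul]) l

namespace IsBaumgarteTrajectory

variable {M K : Matrix ι ι ℝ} {C : Matrix κ ι ℝ} {Δt γ α : ℝ} {d v : ℕ → ι → ℝ}
  {lam : ℕ → κ → ℝ}

lemma dotProduct_eq_zero (h : IsBaumgarteTrajectory M K C Δt γ α d v lam) (n : ℕ) :
    (v n + (α / Δt) • d n) ⬝ᵥ (M *ᵥ v n + K *ᵥ d n) = 0 :=
  add_smul_dotProduct_mulVec_add_mulVec_eq_zero (h.equation n) (h.constraint n)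

lemma dotProduct_average_eq_zero (h : IsBaumgarteTrajectory M K C Δt γ α d v lam) (n : ℕ) :
    let u := (1 - γ) • v n + γ • v (n + 1)
    let y := (1 - γ) • d n + γ • d (n + 1)
    (u + (α / Δt) • y) ⬝ᵥ (M *ᵥ u + K *ᵥ y) = 0 := by
  refine add_smul_dotProduct_mulVec_add_mulVec_eq_zero (C := C)
    (l := (1 - γ) • lam n + γ • lam (n + 1)) ?_ ?_
  · have h0 := h.equation n
    have h1 := h.equation (n + 1)
    simp only [mulVec_add, mulVec_smul] at h0 h1 ⊢
    linear_combination (norm := module) (1 - γ) • h0 + γ • h1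
  · have h0 := h.constraint n
    have h1 := h.constraint (n + 1)
    simp only [mulVec_add, mulVec_smul] at h0 h1 ⊢
    linear_combination (norm := module) (1 - γ) • h0 + γ • h1

lemma baumgarteEnergy_succ_le (h : IsBaumgarteTrajectory M K C Δt γ α d v lam)
    (hM : M.IsHermitian) (hK : K.PosSemidef) (hΔt : 0 < Δt) (hα : 0 ≤ α)
    (hAt : ((1 + α * (γ - 1/2)) • M + (Δt * (γ - 1/2)) • K).PosSemidef) (n : ℕ) :
    baumgarteEnergy M K (α / Δt) (d (n + 1)) ≤ baumgarteEnergy M K (α / Δt) (d n) := by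
  set u := (1 - γ) • v n + γ • v (n + 1)
  have hd : d (n + 1) = d n + Δt • u := h.update n
  have hy : (1 - γ) • d n + γ • d (n + 1) = d n + (γ * Δt) • u := by rw [hd]; module
  have hpair : (u + (α / Δt) • (d n + (γ * Δt) • u)) ⬝ᵥ
      (M *ᵥ u + K *ᵥ (d n + (γ * Δt) • u)) = 0 := hy ▸ h.dotProduct_average_eq_zero n
  have hbal := baumgarteEnergy_add_smul_sub hM hK.isHermitian (γ := γ)
    (div_mul_cancel₀ α hΔt.ne') (d n) u
  rw [← hd, hpair] at hbal
  have hAu := hAt.dotProduct_mulVec_nonneg u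
  have hKy := hK.dotProduct_mulVec_nonneg (d n + (γ * Δt) • u)
  rw [star_trivial] at hAu hKy
  nlinarith

lemma baumgarteEnergy_le (h : IsBaumgarteTrajectory M K C Δt γ α d v lam)
    (hM : M.IsHermitian) (hK : K.PosSemidef) (hΔt : 0 < Δt) (hα : 0 ≤ α)
    (hAt : ((1 + α * (γ - 1/2)) • M + (Δt * (γ - 1/2)) • K).PosSemidef) (n : ℕ) :
    baumgarteEnergy M K (α / Δt) (d n) ≤ baumgarteEnergy M K (α / Δt) (d 0) :=
  antitone_nat_of_succ_le (f := fun n => baumgarteEnergy M K (α / Δt) (d n))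
    (h.baumgarteEnergy_succ_le hM hK hΔt hα hAt) (Nat.zero_le n)

lemma sq_mul_dotProduct_self_le (h : IsBaumgarteTrajectory M K C Δt γ α d v lam)
    (hM : M.IsHermitian) (hK : K.PosSemidef) (hβ : 0 ≤ α / Δt) {μ : ℝ} (hμ : 0 ≤ μ)
    (hcoer : ∀ x, μ * (x ⬝ᵥ x) ≤ x ⬝ᵥ M *ᵥ x) (n : ℕ) :
    μ ^ 2 * (v n ⬝ᵥ v n) ≤ (K + (α / Δt) • M) *ᵥ d n ⬝ᵥ (K + (α / Δt) • M) *ᵥ d n := by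
  set β := α / Δt
  set P := K + β • M
  have hbal : v n ⬝ᵥ M *ᵥ v n + β * (d n ⬝ᵥ K *ᵥ d n) + v n ⬝ᵥ P *ᵥ d n = 0 := by
    rw [← h.dotProduct_eq_zero n]
    simp only [P, add_mulVec, smul_mulVec, add_dotProduct, dotProduct_add, smul_dotProduct,
      dotProduct_smul, smul_eq_mul, dotProduct_mulVec_comm_of_isHermitian hM (d n) (v n)]
    ring
  have hKd := hK.dotProduct_mulVec_nonneg (d n)
  rw [star_trivial] at hKd
  have hv : μ * (v n ⬝ᵥ v n) ≤ -(v n ⬝ᵥ P *ᵥ d n) := by nlinarith [hcoer (v n)]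
  have hcs := dotProduct_sq_le (v n) (P *ᵥ d n)
  have hv0 := dotProduct_self_star_nonneg (v n)
  have hPd0 := dotProduct_self_star_nonneg (P *ᵥ d n)
  simp only [star_trivial] at hv0 hPd0
  rcases hv0.eq_or_lt with hz | hpos
  · rw [← hz, mul_zero]; exact hPd0
  · refine le_of_mul_le_mul_left ?_ hpos
    nlinarith [mul_self_le_mul_self (by positivity) hv]

theorem exists_velocity_and_drift_bound (h : IsBaumgarteTrajectory M K C Δt γ α d v lam)
    (hM : M.PosDef) (hK : K.PosSemidef) (hΔt : 0 < Δt) (hα : 0 < α)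
    (hAt : ((1 + α * (γ - 1/2)) • M + (Δt * (γ - 1/2)) • K).PosSemidef) :
    ∃ c, ∀ n, v n ⬝ᵥ v n ≤ c ∧ C *ᵥ d n ⬝ᵥ C *ᵥ d n ≤ c := by
  classical
  have hβ : 0 < α / Δt := div_pos hα hΔt
  obtain ⟨μ, hμ, hcoer⟩ := hM.exists_pos_mul_dotProduct_self_le
  obtain ⟨cP, hcP, hP⟩ := exists_mulVec_dotProduct_self_le (K + (α / Δt) • M)
  obtain ⟨cC, hcC, hC⟩ := exists_mulVec_dotProduct_self_le C
  set D := baumgarteEnergy M K (α / Δt) (d 0) / (α / Δt * μ)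
  have hd : ∀ n, d n ⬝ᵥ d n ≤ D := by
    intro n
    have hKd := hK.dotProduct_mulVec_nonneg (d n)
    rw [star_trivial] at hKd
    rw [le_div_iff₀ (by positivity)]
    calc d n ⬝ᵥ d n * (α / Δt * μ) = α / Δt * (μ * (d n ⬝ᵥ d n)) := by ring
      _ ≤ α / Δt * (d n ⬝ᵥ M *ᵥ d n) := by gcongr; exact hcoer (d n)
      _ ≤ baumgarteEnergy M K (α / Δt) (d n) := by unfold baumgarteEnergy; linarith
      _ ≤ _ := h.baumgarteEnergy_le hM.isHermitian hK hΔt hα.le hAt n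
  have hD : 0 ≤ D := (dotProduct_self_star_nonneg (d 0)).trans (hd 0)
  refine ⟨(cP / μ ^ 2 + cC) * D, fun n => ⟨?_, ?_⟩⟩
  · have hv := h.sq_mul_dotProduct_self_le hM.isHermitian hK hβ.le hμ.le hcoer n
    have : v n ⬝ᵥ v n ≤ cP / μ ^ 2 * D := by
      rw [div_mul_eq_mul_div, le_div_iff₀ (by positivity)]
      nlinarith [hP (d n), mul_le_mul_of_nonneg_left (hd n) hcP]
    nlinarith [mul_nonneg hcC hD]
  · nlinarith [hC (d n), mul_le_mul_of_nonneg_left (hd n) hcC,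
      mul_nonneg (div_nonneg hcP (sq_nonneg μ)) hD]

end IsBaumgarteTrajectory

theorem isBaumgarteTrajectory_blockDiagonal' [DecidableEq ι] {p : ι → Type*}
    [∀ i, Fintype (p i)] {M K : ∀ i, Matrix (p i) (p i) ℝ} {C : ∀ i, Matrix κ (p i) ℝ}
    {Δt γ α : ℝ} {d v : ∀ i, ℕ → p i → ℝ} {lam : ℕ → κ → ℝ}
    (heq : ∀ i n, M i *ᵥ v i n + K i *ᵥ d i n = (C i)ᵀ *ᵥ lam n)
    (hupd : ∀ i n, d i (n + 1) = d i n + Δt • ((1 - γ) • v i n + γ • v i (n + 1)))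
    (hcont : ∀ n, ∑ i, C i *ᵥ v i n + (α / Δt) • ∑ i, C i *ᵥ d i n = 0) :
    IsBaumgarteTrajectory (blockDiagonal' M) (blockDiagonal' K) (sigmaCols C) Δt γ α
      (fun n => Sigma.uncurry fun i => d i n) (fun n => Sigma.uncurry fun i => v i n) lam where
  equation n := by
    rw [blockDiagonal'_mulVec_uncurry, blockDiagonal'_mulVec_uncurry, transpose_sigmaCols_mulVec]
    ext ⟨i, j⟩
    exact congrFun (heq i n) j
  update n := by
    ext ⟨i, j⟩
    exact congrFun (hupd i n) j
  constraint n := by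
    rw [sigmaCols_mulVec_uncurry, sigmaCols_mulVec_uncurry]
    exact hcont n

end Baumgarte

lemma enorm_smul_eq_abs_mul {k : ℕ} (c : ℝ) (x : Fin k → ℝ) :
    _root_.enorm (c • x) = |c| * _root_.enorm x := by
  rw [_root_.enorm, _root_.enorm, smul_dotProduct, dotProduct_smul, smul_eq_mul, smul_eq_mul,
    ← mul_assoc, Real.sqrt_mul (mul_self_nonneg c), Real.sqrt_mul_self_eq_abs]

lemma enorm_eq_abs_div_mul_of_add_smul_eq_zero {k : ℕ} {x y : Fin k → ℝ} {a b : ℝ}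
    (ha : a ≠ 0) (hb : b ≠ 0) (h : x + (a / b) • y = 0) :
    _root_.enorm y = |b / a| * _root_.enorm x := by
  have hy : y = (-(b / a)) • x := by
    ext j
    have hj := congrFun h j
    simp only [Pi.add_apply, Pi.smul_apply, smul_eq_mul, Pi.zero_apply] at hj ⊢
    field_simp at hj ⊢
    linarith
  rw [hy, enorm_smul_eq_abs_mul, abs_neg]

theorem baumgarte_stable_and_drift_bounded_general
    (S m : ℕ) (nn : Fin S → ℕ)
    (M K : ∀ i : Fin S, Matrix (Fin (nn i)) (Fin (nn i)) ℝ)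
    (hM : ∀ i, (M i).PosDef) (hK : ∀ i, (K i).PosSemidef)
    (C : ∀ i : Fin S, Matrix (Fin m) (Fin (nn i)) ℝ)
    (Δt γ α : ℝ) (hΔt : 0 < Δt) (hα : 0 < α)
    (hAt : ∀ i, ((1 + α * (γ - 1/2)) • M i + (Δt * (γ - 1/2)) • K i).PosSemidef)
    (d v : ∀ i : Fin S, ℕ → (Fin (nn i) → ℝ)) (lam : ℕ → (Fin m → ℝ))
    (heq : ∀ i n, (M i).mulVec (v i n) + (K i).mulVec (d i n) = (C i)ᵀ.mulVec (lam n))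
    (hupd : ∀ i n, d i (n + 1) = d i n + Δt • ((1 - γ) • v i n + γ • v i (n + 1)))
    (hcont : ∀ n, ∑ i : Fin S, (C i).mulVec (v i n) +
      (α / Δt) • ∑ i : Fin S, (C i).mulVec (d i n) = 0) :
    ∃ C₀ > (0 : ℝ),
      (∀ i : Fin S, ∀ n : ℕ, _root_.enorm (v i n) ≤ C₀) ∧
      (∀ n : ℕ,
        _root_.enorm (∑ i : Fin S, (C i).mulVec (d i n)) =
          (Δt / α) * _root_.enorm (∑ i : Fin S, (C i).mulVec (v i n)) ∧
        _root_.enorm (∑ i : Fin S, (C i).mulVec (d i n)) ≤ C₀) := by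
  have hAt' : ((1 + α * (γ - 1/2)) • blockDiagonal' M
      + (Δt * (γ - 1/2)) • blockDiagonal' K).PosSemidef := by
    rw [← blockDiagonal'_smul, ← blockDiagonal'_smul, ← blockDiagonal'_add]
    exact PosSemidef.blockDiagonal' hAt
  have htraj := isBaumgarteTrajectory_blockDiagonal' heq hupd hcont
  obtain ⟨c, hc⟩ := htraj.exists_velocity_and_drift_bound (PosDef.blockDiagonal' hM)
    (PosSemidef.blockDiagonal' hK) hΔt hα hAt'
  refine ⟨√c + 1, by positivity, fun i n => ?_, fun n => ⟨?_, ?_⟩⟩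
  · exact (Real.sqrt_le_sqrt ((dotProduct_self_le_uncurry _ i).trans (hc n).1)).trans
      (by linarith)
  · rw [enorm_eq_abs_div_mul_of_add_smul_eq_zero hα.ne' hΔt.ne' (hcont n),
      abs_of_pos (div_pos hΔt hα)]
  · have hdrift := (hc n).2
    rw [sigmaCols_mulVec_uncurry] at hdrift
    exact (Real.sqrt_le_sqrt hdrift).trans (by linarith)

/-- Stability and bounded drift of the Baumgarte stabilized method: with parameter
`α > 0` and each `Ãᵢ = α*·Mᵢ + Δt·(γ - 1/2)·Kᵢ` (where `α* = 1 + α·(γ - 1/2)`)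
positive semidefinite, the rates `vᵢ(n)` are uniformly bounded, and the drift in the
original constraint satisfies
`‖∑ᵢ Cᵢ·dᵢ(n)‖ = (Δt/α)·‖∑ᵢ Cᵢ·vᵢ(n)‖ ≤ C` for all `n`. -/
theorem baumgarte_stable_and_drift_bounded
    (S m : ℕ) (hS : 1 ≤ S) (nn : Fin S → ℕ)
    (M K : ∀ i : Fin S, Matrix (Fin (nn i)) (Fin (nn i)) ℝ)
    (hM : ∀ i, (M i).PosDef) (hK : ∀ i, (K i).PosSemidef)
    (C : ∀ i : Fin S, Matrix (Fin m) (Fin (nn i)) ℝ)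
    (Δt γ α : ℝ) (hΔt : 0 < Δt) (hγ₀ : 0 ≤ γ) (hγ₁ : γ ≤ 1) (hα : 0 < α)
    (hAt : ∀ i, ((1 + α * (γ - 1/2)) • M i + (Δt * (γ - 1/2)) • K i).PosSemidef)
    (d v : ∀ i : Fin S, ℕ → (Fin (nn i) → ℝ)) (lam : ℕ → (Fin m → ℝ))
    (heq : ∀ i n, (M i).mulVec (v i n) + (K i).mulVec (d i n) = (C i)ᵀ.mulVec (lam n))
    (hupd : ∀ i n, d i (n + 1) = d i n + Δt • ((1 - γ) • v i n + γ • v i (n + 1)))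
    (hcont : ∀ n, ∑ i : Fin S, (C i).mulVec (v i n) +
      (α / Δt) • ∑ i : Fin S, (C i).mulVec (d i n) = 0) :
    ∃ C₀ > (0 : ℝ),
      (∀ i : Fin S, ∀ n : ℕ, _root_.enorm (v i n) ≤ C₀) ∧
      (∀ n : ℕ,
        _root_.enorm (∑ i : Fin S, (C i).mulVec (d i n)) =
          (Δt / α) * _root_.enorm (∑ i : Fin S, (C i).mulVec (v i n)) ∧
        _root_.enorm (∑ i : Fin S, (C i).mulVec (d i n)) ≤ C₀) :=
  baumgarte_stable_and_drift_bounded_general S m nn M K hM hK C Δt γ α hΔt hα hAt d v lam heq hupd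
    hcont
end
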